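/- arXiv:1811.04063 — 15 statements merged into one kernel-verified Lean document; each statement's English description precedes it below -/
import Mathlib

section
/- Let N be a finite player set and w a cooperative interval game on N. Then the following four assertions are equivalent: (1) w is selection convex; (2) for all nonempty coalitions S, T ⊆ N with S ∩ T ≠ S and S ∩ T ≠ T one has w̄(S) + w̄(T) ≤ w̲(S ∪ T) + w̲(S ∩ T); (3) for every nonempty U ⊆ N and all coalitions U₁ ⊊ U₂ ⊆ N ∖ U one has w̄(U₁ ∪ U) − w̲(U₁) ≤ w̲(U₂ ∪ U) − w̄(U₂); (4) for every player i ∈ N and all coalitions T₁ ⊊ T₂ ⊆ N ∖ {i} one has w̄(T₁ ∪ {i}) − w̲(T₁) ≤ w̲(T₂ ∪ {i}) − w̄(T₂). -/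
open Finset

variable {N : Type*} [Fintype N] [DecidableEq N]

/-- A cooperative interval game, given by its lower and upper border games. -/
def IsIntervalGame (wl wu : Finset N → ℝ) : Prop :=
  (∀ S, wl S ≤ wu S) ∧ wl ∅ = 0 ∧ wu ∅ = 0

/-- A selection of the interval game `(wl, wu)`. -/
def IsSelection (wl wu v : Finset N → ℝ) : Prop :=
  v ∅ = 0 ∧ ∀ S, wl S ≤ v S ∧ v S ≤ wu S

/-- Convexity (supermodularity) of a cooperative game. -/
def IsConvexGame (v : Finset N → ℝ) : Prop :=
  ∀ S T, v S + v T ≤ v (S ∪ T) + v (S ∩ T)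

/-- Membership of a payoff vector in the core of a cooperative game. -/
def InCore (v : Finset N → ℝ) (x : N → ℝ) : Prop :=
  (∑ i, x i) = v Finset.univ ∧ ∀ S : Finset N, v S ≤ ∑ i ∈ S, x i

/-- The selection core of an interval game. -/
def selectionCore (wl wu : Finset N → ℝ) : Set (N → ℝ) :=
  {x | ∃ v, IsSelection wl wu v ∧ InCore v x}

/-- `gen` of the interval core of an interval game: all real payoff vectors generated by
some element `(X i)_{i}` (given by lower bounds `Xl` and upper bounds `Xu`) of the interval core. -/
def genIntervalCore (wl wu : Finset N → ℝ) : Set (N → ℝ) :=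
  {x | ∃ Xl Xu : N → ℝ, (∀ i, Xl i ≤ Xu i) ∧
    (∑ i, Xl i) = wl Finset.univ ∧ (∑ i, Xu i) = wu Finset.univ ∧
    (∀ S : Finset N, S.Nonempty → wl S ≤ ∑ i ∈ S, Xl i ∧ wu S ≤ ∑ i ∈ S, Xu i) ∧
    ∀ i, Xl i ≤ x i ∧ x i ≤ Xu i}

/-- The Shapley coefficient `|S|! (n - |S| - 1)! / n!`. -/
noncomputable def shapleyCoeff (n k : ℕ) : ℝ :=
  (Nat.factorial k * Nat.factorial (n - k - 1) : ℝ) / (Nat.factorial n : ℝ)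

/-- The Shapley value of a cooperative game. -/
noncomputable def shapley (v : Finset N → ℝ) (i : N) : ℝ :=
  ∑ S ∈ (Finset.univ.erase i).powerset,
    shapleyCoeff (Fintype.card N) S.card * (v (insert i S) - v S)

/-- Lower endpoint of the interval Shapley value extension `Φ*`. -/
noncomputable def phiLow (wl wu : Finset N → ℝ) (i : N) : ℝ :=
  ∑ S ∈ (Finset.univ.erase i).powerset,
    shapleyCoeff (Fintype.card N) S.card * (wl (insert i S) - wu S)

/-- Upper endpoint of the interval Shapley value extension `Φ*`. -/
noncomputable def phiHigh (wl wu : Finset N → ℝ) (i : N) : ℝ :=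
  ∑ S ∈ (Finset.univ.erase i).powerset,
    shapleyCoeff (Fintype.card N) S.card * (wu (insert i S) - wl S)

lemma marg_to_convex (v : Finset N → ℝ)
    (h : ∀ (i : N) (T₁ T₂ : Finset N), T₁ ⊆ T₂ → i ∉ T₂ →
      v (insert i T₁) - v T₁ ≤ v (insert i T₂) - v T₂) :
    IsConvexGame v := by
  suffices H : ∀ n (S T : Finset N), (S \ T).card = n →
      v S + v T ≤ v (S ∪ T) + v (S ∩ T) by
    intro S T; exact H _ S T rfl
  intro n
  induction n with
  | zero =>
    intro S T h0
    have hST : S ⊆ T := by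
      rw [Finset.card_eq_zero, Finset.sdiff_eq_empty_iff_subset] at h0
      exact h0
    rw [Finset.union_eq_right.mpr hST, Finset.inter_eq_left.mpr hST]
    linarith
  | succ n ih =>
    intro S T h0
    obtain ⟨i, hi⟩ : (S \ T).Nonempty := Finset.card_pos.mp (by omega)
    obtain ⟨hiS, hiT⟩ := Finset.mem_sdiff.mp hi
    set S' := S.erase i with hS'
    have hins : insert i S' = S := Finset.insert_erase hiS
    have hcard : (S' \ T).card = n := by
      have : S' \ T = (S \ T).erase i := by
        rw [hS', Finset.erase_sdiff_comm]
      rw [this, Finset.card_erase_of_mem hi, h0]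
      omega
    have hIH := ih S' T hcard
    have hiS'T : i ∉ S' ∪ T := by
      simp [Finset.mem_union, hS', hiT]
    have hmarg := h i S' (S' ∪ T) Finset.subset_union_left hiS'T
    have h1 : insert i (S' ∪ T) = S ∪ T := by
      rw [← Finset.insert_union, hins]
    have h2 : S' ∩ T = S ∩ T := by
      rw [← hins, Finset.insert_inter_of_notMem hiT]
    rw [hins, h1] at hmarg
    rw [← h2]
    linarith

theorem selection_convex_tfae (wl wu : Finset N → ℝ) (hw : IsIntervalGame wl wu) :
    List.TFAE
      [ ∀ v, IsSelection wl wu v → IsConvexGame v,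
        ∀ S T : Finset N, S.Nonempty → T.Nonempty → S ∩ T ≠ S → S ∩ T ≠ T →
          wu S + wu T ≤ wl (S ∪ T) + wl (S ∩ T),
        ∀ (U U₁ U₂ : Finset N), U.Nonempty → U₁ ⊂ U₂ → U₂ ⊆ Finset.univ \ U →
          wu (U₁ ∪ U) - wl U₁ ≤ wl (U₂ ∪ U) - wu U₂,
        ∀ (i : N) (T₁ T₂ : Finset N), T₁ ⊂ T₂ → T₂ ⊆ Finset.univ \ {i} →
          wu (insert i T₁) - wl T₁ ≤ wl (insert i T₂) - wu T₂ ] := by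
  obtain ⟨hle, hl0, hu0⟩ := hw
  tfae_have 1 → 2 := by
    intro h1 S T hS hT hST1 hST2
    classical
    set v : Finset N → ℝ := fun A => if A = S ∨ A = T then wu A else wl A with hv
    have hsel : IsSelection wl wu v := by
      refine ⟨?_, fun A => ?_⟩
      · have hne1 : (∅ : Finset N) ≠ S := fun h => by simp [← h] at hS
        have hne2 : (∅ : Finset N) ≠ T := fun h => by simp [← h] at hT
        simp [hv, hne1, hne2, hl0]
      · by_cases hA : A = S ∨ A = T <;> simp [hv, hA, hle A]
    have hconv := h1 v hsel S T
    have hvS : v S = wu S := by simp [hv]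
    have hvT : v T = wu T := by simp [hv]
    have hU1 : S ∪ T ≠ S := fun h => hST2 (by
      have : T ⊆ S := Finset.union_eq_left.mp h
      exact Finset.inter_eq_right.mpr this)
    have hU2 : S ∪ T ≠ T := fun h => hST1 (by
      have : S ⊆ T := Finset.union_eq_right.mp h
      exact Finset.inter_eq_left.mpr this)
    have hvU : v (S ∪ T) = wl (S ∪ T) := by simp [hv, hU1, hU2]
    have hvI : v (S ∩ T) = wl (S ∩ T) := by simp [hv, hST1, hST2]
    rw [hvS, hvT, hvU, hvI] at hconv
    exact hconv
  tfae_have 2 → 3 := by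
    intro h2 U U₁ U₂ hU hsub hdisj
    have hUdisj : ∀ x ∈ U₂, x ∉ U := fun x hx =>
      (Finset.mem_sdiff.mp (hdisj hx)).2
    have hS : (U₁ ∪ U).Nonempty := hU.mono Finset.subset_union_right
    obtain ⟨j, hjU₂, hjU₁⟩ := Finset.exists_of_ssubset hsub
    have hT : U₂.Nonempty := ⟨j, hjU₂⟩
    have hdisjUU₂ : Disjoint U U₂ := Finset.disjoint_right.mpr hUdisj
    have hinter : (U₁ ∪ U) ∩ U₂ = U₁ := by
      rw [Finset.union_inter_distrib_right,
        Finset.inter_eq_left.mpr hsub.subset,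
        Finset.disjoint_iff_inter_eq_empty.mp hdisjUU₂, Finset.union_empty]
    have hne1 : (U₁ ∪ U) ∩ U₂ ≠ U₁ ∪ U := by
      rw [hinter]
      intro h
      obtain ⟨x, hx⟩ := hU
      have : x ∈ U₁ ∪ U := Finset.mem_union_right _ hx
      rw [← h] at this
      exact hUdisj x (hsub.subset this) hx
    have hne2 : (U₁ ∪ U) ∩ U₂ ≠ U₂ := by
      rw [hinter]
      exact fun h => hjU₁ (h ▸ hjU₂)
    have := h2 (U₁ ∪ U) U₂ hS hT hne1 hne2
    rw [hinter] at this
    have hunion : U₁ ∪ U ∪ U₂ = U₂ ∪ U := by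
      rw [Finset.union_right_comm, Finset.union_eq_right.mpr hsub.subset,
        Finset.union_comm]
    rw [hunion] at this
    linarith
  tfae_have 3 → 4 := by
    intro h3 i T₁ T₂ hsub hsubset
    have := h3 {i} T₁ T₂ (Finset.singleton_nonempty i) hsub hsubset
    rw [Finset.union_comm T₁ {i}, Finset.union_comm T₂ {i}] at this
    rw [Finset.insert_eq, Finset.insert_eq]
    exact this
  tfae_have 4 → 1 := by
    intro h4 v hv
    apply marg_to_convex
    intro i T₁ T₂ hsub hi
    rcases eq_or_ne T₁ T₂ with rfl | hne
    · exact le_rfl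
    · have hss : T₁ ⊂ T₂ := hsub.ssubset_of_ne hne
      have hT₂ : T₂ ⊆ Finset.univ \ {i} := fun x hx =>
        Finset.mem_sdiff.mpr ⟨Finset.mem_univ x, by
          simp only [Finset.mem_singleton]
          rintro rfl; exact hi hx⟩
      have key := h4 i T₁ T₂ hss hT₂
      have h1 := (hv.2 (insert i T₁)).2
      have h2 := (hv.2 T₁).1
      have h3 := (hv.2 (insert i T₂)).1
      have h5 := (hv.2 T₂).2
      linarith
  tfae_finish
end

section
/- A cooperative interval game w on a finite player set N is selection convex if and only if for all nonempty coalitions S, T ⊆ N with S ∩ T ≠ S and S ∩ T ≠ T one has w̄(S) + w̄(T) ≤ w̲(S ∪ T) + w̲(S ∩ T). -/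
open Finset

variable {N : Type*} [Fintype N] [DecidableEq N]

theorem selection_convex_iff (wl wu : Finset N → ℝ) (hw : IsIntervalGame wl wu) :
    (∀ v, IsSelection wl wu v → IsConvexGame v) ↔
      ∀ S T : Finset N, S.Nonempty → T.Nonempty → S ∩ T ≠ S → S ∩ T ≠ T →
        wu S + wu T ≤ wl (S ∪ T) + wl (S ∩ T) := by
  obtain ⟨hle, hl0, hu0⟩ := hw
  constructor
  · intro hconv S T hS hT hST1 hST2
    classical
    set v : Finset N → ℝ := fun A => if A = S ∨ A = T then wu A else wl A with hv
    have hsel : IsSelection wl wu v := by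
      refine ⟨?_, fun A => ?_⟩
      · have h1 : (∅ : Finset N) ≠ S := fun h => by simp [← h] at hS
        have h2 : (∅ : Finset N) ≠ T := fun h => by simp [← h] at hT
        simp [hv, h1, h2, hl0]
      · by_cases h : A = S ∨ A = T <;> simp [hv, h, hle A, le_refl]
    have key := hconv v hsel S T
    have hvS : v S = wu S := by simp [hv]
    have hvT : v T = wu T := by simp [hv]
    have hUniS : S ∪ T ≠ S := fun h => hST2 (by
      have : T ⊆ S := by rw [← h]; exact subset_union_right
      exact inter_eq_right.mpr this)
    have hUniT : S ∪ T ≠ T := fun h => hST1 (by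
      have : S ⊆ T := by rw [← h]; exact subset_union_left
      exact inter_eq_left.mpr this)
    have hvU : v (S ∪ T) = wl (S ∪ T) := by
      simp [hv, hUniS, hUniT]
    have hvI : v (S ∩ T) = wl (S ∩ T) := by
      simp [hv, hST1, hST2]
    rw [hvS, hvT, hvU, hvI] at key
    exact key
  · intro h v hsel S T
    obtain ⟨hv0, hvb⟩ := hsel
    by_cases h1 : S ∩ T = S
    · have hU : S ∪ T = T := union_eq_right.mpr (inter_eq_left.mp h1)
      rw [hU, h1]; linarith
    by_cases h2 : S ∩ T = T
    · have hU : S ∪ T = S := union_eq_left.mpr (inter_eq_right.mp h2)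
      rw [hU, h2]
    have hS : S.Nonempty := by
      rcases S.eq_empty_or_nonempty with rfl | h; · simp at h1
      · exact h
    have hT : T.Nonempty := by
      rcases T.eq_empty_or_nonempty with rfl | h; · simp at h2
      · exact h
    have := h S T hS hT h1 h2
    have b1 := (hvb S).2
    have b2 := (hvb T).2
    have b3 := (hvb (S ∪ T)).1
    have b4 := (hvb (S ∩ T)).1
    linarith
end

section
/- Let w be a cooperative interval game on a finite player set N. Then the following are equivalent: (i) for all nonempty coalitions S, T ⊆ N with S ∩ T ≠ S and S ∩ T ≠ T one has w̄(S) + w̄(T) ≤ w̲(S ∪ T) + w̲(S ∩ T); (ii) for every nonempty coalition U ⊆ N and all coalitions U₁ ⊊ U₂ ⊆ N ∖ U one has w̄(U₁ ∪ U) − w̲(U₁) ≤ w̲(U₂ ∪ U) − w̄(U₂). -/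
open Finset

variable {N : Type*} [Fintype N] [DecidableEq N]

theorem pairwise_iff_union_condition (wl wu : Finset N → ℝ) (hw : IsIntervalGame wl wu) :
    (∀ S T : Finset N, S.Nonempty → T.Nonempty → S ∩ T ≠ S → S ∩ T ≠ T →
        wu S + wu T ≤ wl (S ∪ T) + wl (S ∩ T)) ↔
      ∀ (U U₁ U₂ : Finset N), U.Nonempty → U₁ ⊂ U₂ → U₂ ⊆ Finset.univ \ U →
        wu (U₁ ∪ U) - wl U₁ ≤ wl (U₂ ∪ U) - wu U₂ := by
  constructor
  · intro h U U₁ U₂ hU hsub hdisj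
    have hdU : Disjoint U₂ U := by
      rw [Finset.disjoint_left]
      intro a ha
      have := hdisj ha
      simp at this
      exact this
    have hd1 : Disjoint U₁ U := Finset.disjoint_of_subset_left hsub.subset hdU
    have hI : (U₁ ∪ U) ∩ U₂ = U₁ := by
      ext a
      simp only [Finset.mem_inter, Finset.mem_union]
      constructor
      · rintro ⟨h1 | h1, h2⟩
        · exact h1
        · exact absurd h2 (Finset.disjoint_right.mp hdU h1)
      · intro h1
        exact ⟨Or.inl h1, hsub.subset h1⟩
    have hUn : (U₁ ∪ U) ∪ U₂ = U₂ ∪ U := by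
      ext a
      simp only [Finset.mem_union]
      have h1 : a ∈ U₁ → a ∈ U₂ := fun ha => hsub.subset ha
      tauto
    have hS1 : (U₁ ∪ U).Nonempty := Finset.Nonempty.inr hU
    have hT1 : U₂.Nonempty := by
      rcases Finset.exists_of_ssubset hsub with ⟨a, ha, _⟩
      exact ⟨a, ha⟩
    have hne1 : (U₁ ∪ U) ∩ U₂ ≠ U₁ ∪ U := by
      rw [hI]
      intro heq
      obtain ⟨a, ha⟩ := hU
      have : a ∈ U₁ := heq ▸ Finset.mem_union_right _ ha
      exact Finset.disjoint_left.mp hd1 this ha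
    have hne2 : (U₁ ∪ U) ∩ U₂ ≠ U₂ := by
      rw [hI]
      exact hsub.ne
    have := h (U₁ ∪ U) U₂ hS1 hT1 hne1 hne2
    rw [hI, hUn] at this
    linarith
  · intro h S T hS hT h1 h2
    have hU : (S \ T).Nonempty := by
      rw [Finset.sdiff_nonempty]
      intro hle
      exact h1 (by rw [Finset.inter_eq_left.mpr hle])
    have hsub : S ∩ T ⊂ T := ⟨Finset.inter_subset_right, fun hle => h2 (Finset.Subset.antisymm Finset.inter_subset_right (fun a ha => hle ha))⟩
    have hdisj : T ⊆ Finset.univ \ (S \ T) := by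
      intro a ha
      simp [ha]
    have := h (S \ T) (S ∩ T) T hU hsub hdisj
    have e1 : (S ∩ T) ∪ (S \ T) = S := by ext a; simp; tauto
    have e2 : T ∪ (S \ T) = S ∪ T := by ext a; simp; tauto
    rw [e1, e2] at this
    linarith
end

section
/- Let w be a cooperative interval game on a finite player set N. Then the following are equivalent: (i) for every nonempty coalition U ⊆ N and all coalitions U₁ ⊊ U₂ ⊆ N ∖ U one has w̄(U₁ ∪ U) − w̲(U₁) ≤ w̲(U₂ ∪ U) − w̄(U₂); (ii) for every player i ∈ N and all coalitions T₁ ⊊ T₂ ⊆ N ∖ {i} one has w̄(T₁ ∪ {i}) − w̲(T₁) ≤ w̲(T₂ ∪ {i}) − w̄(T₂). -/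
open Finset

variable {N : Type*} [Fintype N] [DecidableEq N]

/-- The lowest possible marginal contribution of `A` to `U₂` dominates the highest possible
marginal contribution of `A` to any strictly smaller `U₁`. -/
def IntervalMarginalMono {α : Type*} [DecidableEq α] (wl wu : Finset α → ℝ) (A : Finset α) :
    Prop :=
  ∀ U₁ U₂ : Finset α, U₁ ⊂ U₂ → Disjoint U₂ A → wu (U₁ ∪ A) - wl U₁ ≤ wl (U₂ ∪ A) - wu U₂

section IntervalMarginalMono

variable {α : Type*} [DecidableEq α] {wl wu : Finset α → ℝ} {A B : Finset α}

/-- Add the inequality for `A` at `U₁ ⊂ U₂` to the one for `B` at `U₁ ∪ A ⊂ U₂ ∪ A`; the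
terms at `U₁ ∪ A` and `U₂ ∪ A` left over in between have the right sign because `wl ≤ wu`. -/
theorem IntervalMarginalMono.union (hle : ∀ S, wl S ≤ wu S) (hA : IntervalMarginalMono wl wu A)
    (hB : IntervalMarginalMono wl wu B) (hAB : Disjoint A B) :
    IntervalMarginalMono wl wu (A ∪ B) := by
  intro U₁ U₂ h12 hdisj
  rw [disjoint_union_right] at hdisj
  obtain ⟨x, hx₂, hx₁⟩ := exists_of_ssubset h12
  have hA₁₂ : U₁ ∪ A ⊂ U₂ ∪ A :=
    Finset.ssubset_iff_subset_ne.2 ⟨union_subset_union_left h12.subset, fun heq =>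
      (mem_union.1 (heq ▸ mem_union_left A hx₂)).elim hx₁ (disjoint_left.1 hdisj.1 hx₂)⟩
  have hstepB := hB (U₁ ∪ A) (U₂ ∪ A) hA₁₂ (disjoint_union_left.2 ⟨hdisj.2, hAB⟩)
  have hstepA := hA U₁ U₂ h12 hdisj.1
  rw [← union_assoc, ← union_assoc]
  linarith [hle (U₁ ∪ A), hle (U₂ ∪ A)]

theorem intervalMarginalMono_of_forall_singleton (hle : ∀ S, wl S ≤ wu S)
    (h : ∀ i, IntervalMarginalMono wl wu {i}) (hA : A.Nonempty) :
    IntervalMarginalMono wl wu A := by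
  induction hA using Nonempty.cons_induction with
  | singleton i => exact h i
  | cons i s hi _ ih =>
    rw [cons_eq_insert, insert_eq, union_comm]
    exact ih.union hle (h i) (disjoint_singleton_right.2 hi)

end IntervalMarginalMono

theorem union_condition_iff_singleton_condition (wl wu : Finset N → ℝ)
    (hw : IsIntervalGame wl wu) :
    (∀ (U U₁ U₂ : Finset N), U.Nonempty → U₁ ⊂ U₂ → U₂ ⊆ Finset.univ \ U →
        wu (U₁ ∪ U) - wl U₁ ≤ wl (U₂ ∪ U) - wu U₂) ↔
      ∀ (i : N) (T₁ T₂ : Finset N), T₁ ⊂ T₂ → T₂ ⊆ Finset.univ \ {i} →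
        wu (insert i T₁) - wl T₁ ≤ wl (insert i T₂) - wu T₂ := by
  have hsubset_iff : ∀ T U : Finset N, T ⊆ univ \ U ↔ Disjoint T U := by simp [subset_sdiff]
  constructor
  · intro h i T₁ T₂ h12 h2
    simpa only [union_singleton] using h {i} T₁ T₂ (singleton_nonempty i) h12 h2
  · intro h U U₁ U₂ hU h12 h2
    have hsingleton : ∀ i, IntervalMarginalMono wl wu {i} := fun i T₁ T₂ h12 h2 => by
      simpa only [union_singleton] using h i T₁ T₂ h12 ((hsubset_iff _ _).2 h2)
    exact intervalMarginalMono_of_forall_singleton hw.1 hsingleton hU U₁ U₂ h12 ((hsubset_iff _ _).1 h2)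
end

section
/- Every cooperative interval game w on a finite player set N whose selection core is empty (SC(w) = ∅) is core-coincident, i.e. gen(𝒞(w)) = SC(w). -/
open Finset

variable {N : Type*} [Fintype N] [DecidableEq N]

theorem empty_selection_core_core_coincident (wl wu : Finset N → ℝ)
    (hw : IsIntervalGame wl wu) (h : selectionCore wl wu = ∅) :
    genIntervalCore wl wu = selectionCore wl wu := by
  rw [h, Set.eq_empty_iff_forall_notMem]
  intro x hx
  obtain ⟨Xl, Xu, _, hsum, _, hS, _⟩ := hx
  have : Xl ∈ selectionCore wl wu := by
    refine ⟨wl, ⟨hw.2.1, fun S => ⟨le_refl _, hw.1 S⟩⟩, hsum, fun S => ?_⟩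
    rcases S.eq_empty_or_nonempty with rfl | hne
    · simp [hw.2.1]
    · exact (hS S hne).1
  rw [h] at this
  exact this
end

section
/- (Core coincidence technical lemma) For every cooperative interval game w on a finite player set N, one has gen(𝒞(w)) = SC(w) if and only if for every x ∈ SC(w) there exist vectors l, u ∈ ℝ^N with l_i ≥ 0 and u_i ≥ 0 for all i, such that: Σ_{i∈N} x_i − Σ_{i∈N} l_i = w̲(N); Σ_{i∈N} x_i + Σ_{i∈N} u_i = w̄(N); Σ_{i∈S} x_i − Σ_{i∈S} l_i ≥ w̲(S) for every S ⊆ N; and Σ_{i∈S} x_i + Σ_{i∈S} u_i ≥ w̄(S) for every S ⊆ N. -/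
open Finset

variable {N : Type*} [Fintype N] [DecidableEq N]

theorem core_coincidence_technical_lemma (wl wu : Finset N → ℝ)
    (hw : IsIntervalGame wl wu) :
    genIntervalCore wl wu = selectionCore wl wu ↔
      ∀ x ∈ selectionCore wl wu, ∃ l u : N → ℝ,
        (∀ i, 0 ≤ l i) ∧ (∀ i, 0 ≤ u i) ∧
        (∑ i, x i) - (∑ i, l i) = wl Finset.univ ∧
        (∑ i, x i) + (∑ i, u i) = wu Finset.univ ∧
        (∀ S : Finset N, wl S ≤ (∑ i ∈ S, x i) - ∑ i ∈ S, l i) ∧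
        (∀ S : Finset N, wu S ≤ (∑ i ∈ S, x i) + ∑ i ∈ S, u i) := by
  obtain ⟨hle, hl0, hu0⟩ := hw
  constructor
  · intro heq x hx
    rw [← heq] at hx
    obtain ⟨Xl, Xu, hXlu, hsl, hsu, hS, hbound⟩ := hx
    refine ⟨fun i => x i - Xl i, fun i => Xu i - x i, fun i => sub_nonneg.2 (hbound i).1,
      fun i => sub_nonneg.2 (hbound i).2, ?_, ?_, ?_, ?_⟩
    · rw [← hsl, Finset.sum_sub_distrib]; ring
    · rw [← hsu, Finset.sum_sub_distrib]; ring
    · intro S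
      rcases S.eq_empty_or_nonempty with rfl | hne
      · simp [hl0]
      · have h1 := (hS S hne).1
        rw [Finset.sum_sub_distrib]; linarith
    · intro S
      rcases S.eq_empty_or_nonempty with rfl | hne
      · simp [hu0]
      · have h1 := (hS S hne).2
        rw [Finset.sum_sub_distrib]; linarith
  · intro h
    ext x
    constructor
    · intro hx
      obtain ⟨Xl, Xu, hXlu, hsl, hsu, hS, hbound⟩ := hx
      have hxu : (∑ i, x i) ≤ wu Finset.univ := by
        rw [← hsu]; exact Finset.sum_le_sum fun i _ => (hbound i).2
      refine ⟨fun S => min (∑ i ∈ S, x i) (wu S), ⟨by simp [hu0], fun S => ⟨?_, min_le_right _ _⟩⟩,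
        ?_, fun S => min_le_left _ _⟩
      · rcases S.eq_empty_or_nonempty with rfl | hne
        · simp [hl0, hu0]
        · exact le_min (le_trans (hS S hne).1 (Finset.sum_le_sum fun i _ => (hbound i).1)) (hle S)
      · exact (min_eq_left hxu).symm
    · intro hx
      obtain ⟨l, u, hl, hu, hsl, hsu, hSl, hSu⟩ := h x hx
      refine ⟨fun i => x i - l i, fun i => x i + u i, fun i => by have := hl i; have := hu i; dsimp only; linarith,
        by rw [← hsl, Finset.sum_sub_distrib], by rw [← hsu, Finset.sum_add_distrib],
        fun S _ => ⟨by have := hSl S; rw [Finset.sum_sub_distrib]; linarith,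
          by have := hSu S; rw [Finset.sum_add_distrib]; linarith⟩,
        fun i => ⟨by have := hl i; dsimp only; linarith, by have := hu i; dsimp only; linarith⟩⟩
end

section
/- Let N be a finite player set with |N| = n ≥ 1 and let b > 0 be a real number. Define the interval game w_A on N by w_A(S) = [1/|S|, 1/|S|] for every coalition S with ∅ ≠ S ≠ N, and w_A(N) = [n, n + b]. Then w_A is core-coincident, i.e. gen(𝒞(w_A)) = SC(w_A). (In particular, there are infinitely many non-degenerated core-coincident interval games.) -/
open Finset

variable {N : Type*} [Fintype N] [DecidableEq N]

theorem example_game_core_coincident (b : ℝ) (hb : 0 < b)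
    (hn : 1 ≤ Fintype.card N) (wl wu : Finset N → ℝ)
    (h0l : wl ∅ = 0) (h0u : wu ∅ = 0)
    (hmid : ∀ S : Finset N, S.Nonempty → S ≠ Finset.univ →
      wl S = 1 / (S.card : ℝ) ∧ wu S = 1 / (S.card : ℝ))
    (hNl : wl Finset.univ = (Fintype.card N : ℝ))
    (hNu : wu Finset.univ = (Fintype.card N : ℝ) + b) :
    genIntervalCore wl wu = selectionCore wl wu := by
  have hcardpos : (0 : ℝ) < (Fintype.card N : ℝ) := by exact_mod_cast hn
  have huniv_ne : (Finset.univ : Finset N) ≠ ∅ := by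
    intro h
    have := Finset.card_univ (α := N)
    rw [h] at this
    simp at this; omega
  ext x
  constructor
  · rintro ⟨Xl, Xu, hle, hsl, hsu, hS, hx⟩
    refine ⟨fun S => if S = Finset.univ then ∑ i, x i else wl S, ⟨?_, ?_⟩, ?_, ?_⟩
    · simp [huniv_ne.symm, h0l]
    · intro S
      by_cases hSu : S = Finset.univ
      · subst hSu
        simp only [if_pos rfl]
        constructor
        · rw [← hsl]; exact Finset.sum_le_sum fun i _ => (hx i).1
        · rw [← hsu]; exact Finset.sum_le_sum fun i _ => (hx i).2
      · simp only [if_neg hSu]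
        refine ⟨le_refl _, ?_⟩
        rcases S.eq_empty_or_nonempty with rfl | hne
        · rw [h0l, h0u]
        · rw [(hmid S hne hSu).1, (hmid S hne hSu).2]
    · simp
    · intro S
      by_cases hSu : S = Finset.univ
      · subst hSu; simp
      · simp only [if_neg hSu]
        rcases S.eq_empty_or_nonempty with rfl | hne
        · simp [h0l]
        · calc wl S ≤ ∑ i ∈ S, Xl i := (hS S hne).1
            _ ≤ ∑ i ∈ S, x i := Finset.sum_le_sum fun i _ => (hx i).1
  · rintro ⟨v, ⟨hv0, hvsel⟩, hvsum, hvcoal⟩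
    have hx1 : ∀ i, 1 ≤ x i := by
      intro i
      by_cases h : ({i} : Finset N) = Finset.univ
      · have hcard1 : Fintype.card N = 1 := by
          rw [← Finset.card_univ, ← h, Finset.card_singleton]
        have hxi : ∑ j, x j = x i := by rw [← Finset.sum_singleton (f := x) (a := i), h]
        have := (hvsel Finset.univ).1
        rw [hNl, hcard1] at this
        rw [← hxi, hvsum]
        exact_mod_cast this
      · have hmem : i ∈ ({i} : Finset N) := Finset.mem_singleton_self i
        have h1 := (hmid {i} ⟨i, hmem⟩ h).1
        have h2 := (hvsel {i}).1
        have h3 := hvcoal {i}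
        rw [Finset.sum_singleton] at h3
        have : wl {i} = 1 := by rw [h1]; simp
        linarith
    have hsumN : ∑ i, x i = v Finset.univ := hvsum
    have hlow : (Fintype.card N : ℝ) ≤ ∑ i, x i := by
      have := (hvsel Finset.univ).1; rw [hNl] at this; linarith
    have hhigh : ∑ i, x i ≤ (Fintype.card N : ℝ) + b := by
      have := (hvsel Finset.univ).2; rw [hNu] at this; linarith
    set s : ℝ := (Fintype.card N : ℝ) + b - ∑ i, x i with hs
    have hs0 : 0 ≤ s := by linarith
    have hsd0 : 0 ≤ s / (Fintype.card N : ℝ) := div_nonneg hs0 hcardpos.le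
    refine ⟨fun _ => 1, fun i => x i + s / (Fintype.card N : ℝ), ?_, ?_, ?_, ?_, ?_⟩
    · intro i; have := hx1 i; linarith
    · rw [hNl]; simp
    · rw [hNu]
      rw [Finset.sum_add_distrib, Finset.sum_const, Finset.card_univ, nsmul_eq_mul,
        mul_div_cancel₀ _ hcardpos.ne']
      ring
    · intro S hne
      have hcount : (1 : ℝ) ≤ (S.card : ℝ) := by
        exact_mod_cast Finset.one_le_card.mpr hne
      have hsumx : v S ≤ ∑ i ∈ S, x i := hvcoal S
      have hsumXu : ∑ i ∈ S, x i ≤ ∑ i ∈ S, (x i + s / (Fintype.card N : ℝ)) :=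
        Finset.sum_le_sum fun i _ => by linarith
      by_cases hSu : S = Finset.univ
      · subst hSu
        constructor
        · rw [hNl]; simp
        · rw [hNu, Finset.sum_add_distrib, Finset.sum_const, Finset.card_univ, nsmul_eq_mul,
            mul_div_cancel₀ _ hcardpos.ne']
          linarith
      · obtain ⟨h1, h2⟩ := hmid S hne hSu
        constructor
        · rw [h1]
          have : ∑ i ∈ S, (1 : ℝ) = (S.card : ℝ) := by simp
          rw [this]
          have hinv : 1 / (S.card : ℝ) ≤ 1 := by
            rw [div_le_one (by linarith)]; exact hcount
          linarith
        · rw [h2]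
          have := (hvsel S).1
          rw [h1] at this
          linarith
    · intro i
      have := hx1 i
      exact ⟨by simpa using this, by simp; linarith⟩
end

section
/- Let w be a cooperative interval game on a finite player set N with |N| ≥ 2 such that w̄(S) − w̲(S) > 0 for every nonempty coalition S ⊆ N. Define the cooperative game u by u(N) = w̄(N) and u(S) = w̲(S) for every S ≠ N. If u has a nonempty core and the upper border game w̄ has a nonempty core, then w is not core-coincident, i.e. gen(𝒞(w)) ≠ SC(w). -/
open Finset

variable {N : Type*} [Fintype N] [DecidableEq N]

theorem not_core_coincident_of_cores_nonempty (wl wu : Finset N → ℝ)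
    (hw : IsIntervalGame wl wu) (hcard : 2 ≤ Fintype.card N)
    (hpos : ∀ S : Finset N, S.Nonempty → 0 < wu S - wl S)
    (u : Finset N → ℝ)
    (huN : u Finset.univ = wu Finset.univ)
    (huS : ∀ S : Finset N, S ≠ Finset.univ → u S = wl S)
    (hcu : ∃ x : N → ℝ, InCore u x)
    (hcup : ∃ x : N → ℝ, InCore wu x) :
    genIntervalCore wl wu ≠ selectionCore wl wu := by
  
  obtain ⟨huwl, hl0, hu0⟩ := hw
  obtain ⟨i, j, hij⟩ := Fintype.exists_pair_of_one_lt_card (α := N) (by omega)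
  obtain ⟨y, hy⟩ := hcup
  have huniv_ne : (∅ : Finset N) ≠ Finset.univ := by
    intro h
    have hc : Fintype.card N = 0 := by
      rw [← Finset.card_univ, ← h, Finset.card_empty]
    omega
  classical
  set 𝒜 : Finset (Finset N) := Finset.univ.filter (fun S => i ∈ S ∧ j ∉ S) with h𝒜
  have hmemA : ({i} : Finset N) ∈ 𝒜 := by
    simp [h𝒜, Finset.mem_filter, Ne.symm hij]
  obtain ⟨S0, hS0A, hS0min⟩ :=
    Finset.exists_min_image 𝒜 (fun S => ∑ k ∈ S, y k - wl S) ⟨_, hmemA⟩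
  rw [h𝒜, Finset.mem_filter] at hS0A
  obtain ⟨-, hiS0, hjS0⟩ := hS0A
  set ε : ℝ := ∑ k ∈ S0, y k - wl S0 with hε
  have hS0ne : S0.Nonempty := ⟨i, hiS0⟩
  have hS0u : S0 ≠ Finset.univ := fun h => hjS0 (h ▸ Finset.mem_univ j)
  have hεpos : 0 < ε := by
    have h1 := hy.2 S0
    have h2 := hpos S0 hS0ne
    simp only [hε]; linarith
  set x : N → ℝ := fun k => y k + (if k = j then ε else 0) - (if k = i then ε else 0)
    with hx
  have hsumS : ∀ S : Finset N, ∑ k ∈ S, x k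
      = (∑ k ∈ S, y k) + (if j ∈ S then ε else 0) - (if i ∈ S then ε else 0) := by
    intro S
    simp [hx, Finset.sum_add_distrib, Finset.sum_sub_distrib, Finset.sum_ite_eq']
  have hsumx : ∑ k, x k = wu Finset.univ := by
    rw [hsumS]
    simp [hy.1]
  have hxS0 : ∑ k ∈ S0, x k = wl S0 := by
    rw [hsumS]
    simp only [hiS0, hjS0, if_true, if_false, if_neg hjS0, if_pos hiS0]
    simp [hε]
  -- x is in the core of u
  have hxu : InCore u x := by
    refine ⟨by rw [hsumx, huN], fun S => ?_⟩
    by_cases hSu : S = Finset.univ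
    · subst hSu
      rw [hsumx, huN]
    · rw [huS S hSu, hsumS]
      by_cases hiS : i ∈ S
      · by_cases hjS : j ∈ S
        · have h1 := hy.2 S
          have h2 := huwl S
          simp only [hiS, hjS, if_true]
          linarith
        · have hmin := hS0min S (by simp [h𝒜, hiS, hjS])
          simp only [hiS, hjS, if_true, if_false] at hmin ⊢
          simp only [hε] at hmin
          linarith
      · have h1 := hy.2 S
        have h2 := huwl S
        simp only [hiS, if_false]
        split_ifs <;> linarith
  -- u is a selection
  have husel : IsSelection wl wu u := by
    refine ⟨by rw [huS ∅ huniv_ne, hl0], fun S => ?_⟩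
    by_cases h : S = Finset.univ
    · subst h; rw [huN]; exact ⟨huwl _, le_refl _⟩
    · rw [huS S h]; exact ⟨le_refl _, huwl S⟩
  have hxsel : x ∈ selectionCore wl wu := ⟨u, husel, hxu⟩
  have hxgen : x ∉ genIntervalCore wl wu := by
    rintro ⟨Xl, Xu, hle, hl, hu, hcons, hbounds⟩
    have hxeq : ∀ k, x k = Xu k := by
      by_contra h
      push_neg at h
      obtain ⟨k, hk⟩ := h
      have hlt : x k < Xu k := lt_of_le_of_ne (hbounds k).2 hk
      have hslt : ∑ m, x m < ∑ m, Xu m :=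
        Finset.sum_lt_sum (fun m _ => (hbounds m).2) ⟨k, Finset.mem_univ k, hlt⟩
      rw [hsumx, hu] at hslt
      exact lt_irrefl _ hslt
    have h1 : wu S0 ≤ ∑ k ∈ S0, Xu k := (hcons S0 hS0ne).2
    have h2 : ∑ k ∈ S0, Xu k = wl S0 := by
      rw [← hxS0]
      exact Finset.sum_congr rfl fun k _ => (hxeq k).symm
    have h3 := hpos S0 hS0ne
    linarith
  intro heq
  rw [← heq] at hxsel
  exact hxgen hxsel
end

section
/- Every strongly balanced cooperative interval game w on a finite player set N with |N| ≥ 2 satisfying w̄(S) − w̲(S) > 0 for every nonempty coalition S ⊆ N is not core-coincident, i.e. gen(𝒞(w)) ≠ SC(w). -/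
open Finset

variable {N : Type*} [Fintype N] [DecidableEq N]

theorem strongly_balanced_not_core_coincident (wl wu : Finset N → ℝ)
    (hw : IsIntervalGame wl wu) (hcard : 2 ≤ Fintype.card N)
    (hpos : ∀ S : Finset N, S.Nonempty → 0 < wu S - wl S)
    (hsb : ∀ v, IsSelection wl wu v → ∃ x : N → ℝ, InCore v x) :
    genIntervalCore wl wu ≠ selectionCore wl wu := by
  classical
  intro heq
  obtain ⟨hle, hl0, hu0⟩ := hw
  have hNpos : 0 < Fintype.card N := by omega
  have hNne : Nonempty N := Fintype.card_pos_iff.mp hNpos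
  have huniv : (Finset.univ : Finset N).Nonempty := Finset.univ_nonempty
  -- two distinct players
  obtain ⟨i, k, hik⟩ : ∃ i k : N, i ≠ k := by
    obtain ⟨i, k, h⟩ := Fintype.exists_pair_of_one_lt_card (α := N) (by omega)
    exact ⟨i, k, h⟩
  -- the minimal width ε
  set 𝒮 : Finset (Finset N) :=
    Finset.univ.powerset.filter (fun S : Finset N => S ≠ ∅) with h𝒮
  have h𝒮ne : 𝒮.Nonempty := by
    refine ⟨Finset.univ, ?_⟩
    simp [h𝒮, huniv.ne_empty]
  set ε : ℝ := 𝒮.inf' h𝒮ne (fun S => wu S - wl S) with hε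
  have hεpos : 0 < ε := by
    rw [hε, Finset.lt_inf'_iff]
    intro S hS
    have : S ≠ ∅ := by simpa [h𝒮] using (Finset.mem_filter.mp hS).2
    exact hpos S (Finset.nonempty_iff_ne_empty.mpr this)
  have hεle : ∀ S : Finset N, S.Nonempty → ε ≤ wu S - wl S := by
    intro S hS
    apply Finset.inf'_le
    simp [h𝒮, hS.ne_empty]
  -- the selection v
  set v : Finset N → ℝ := fun S => if S = Finset.univ then wu Finset.univ else wl S
    with hv
  have hvsel : IsSelection wl wu v := by
    constructor
    · have hne : (∅ : Finset N) ≠ Finset.univ := fun h => huniv.ne_empty h.symm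
      simp only [hv, if_neg hne, hl0]
    · intro S
      by_cases h : S = Finset.univ <;> simp [hv, h, hle S]
      exact hle _
  have hvuniv : v Finset.univ = wu Finset.univ := by simp [hv]
  -- key consequence of gen = SC
  have key : ∀ x : N → ℝ, (∑ j, x j) = wu Finset.univ →
      x ∈ genIntervalCore wl wu → InCore wu x := by
    intro x hxsum hx
    obtain ⟨Xl, Xu, hXle, hXlsum, hXusum, hXS, hXx⟩ := hx
    have h1 : ∀ j ∈ Finset.univ, x j ≤ Xu j := fun j _ => (hXx j).2
    have h2 : ∑ j, x j = ∑ j, Xu j := by rw [hxsum, hXusum]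
    have hXux : ∀ j ∈ Finset.univ, x j = Xu j :=
      (Finset.sum_eq_sum_iff_of_le h1).mp h2
    refine ⟨hxsum, fun S => ?_⟩
    rcases S.eq_empty_or_nonempty with h | h
    · simp [h, hu0]
    · calc wu S ≤ ∑ j ∈ S, Xu j := (hXS S h).2
        _ = ∑ j ∈ S, x j :=
          (Finset.sum_congr rfl fun j _ => (hXux j (Finset.mem_univ j)).symm)
  -- a core element of v
  obtain ⟨x0, hx0⟩ := hsb v hvsel
  have hx0sum : (∑ j, x0 j) = wu Finset.univ := hvuniv ▸ hx0.1
  -- the perturbation direction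
  set f : N → ℝ := fun j => (if j = i then ε else 0) - (if j = k then ε else 0)
    with hf
  have hfsum : ∀ S : Finset N,
      ∑ j ∈ S, f j = (if i ∈ S then ε else 0) - (if k ∈ S then ε else 0) := by
    intro S
    simp [hf, Finset.sum_sub_distrib, Finset.sum_ite_eq']
  have hfsum_univ : ∑ j, f j = 0 := by
    rw [hfsum]; simp
  have hfsum_ge : ∀ S : Finset N, -ε ≤ ∑ j ∈ S, f j := by
    intro S
    rw [hfsum]
    split_ifs <;> linarith
  set xt : ℕ → N → ℝ := fun t j => x0 j + t * f j with hxt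
  have hpt : ∀ t : ℕ, ∀ j, xt (t + 1) j = xt t j + f j := by
    intro t j
    simp only [hxt]
    push_cast
    ring
  have hsumstep : ∀ t : ℕ, ∀ S : Finset N,
      ∑ j ∈ S, xt (t + 1) j = ∑ j ∈ S, xt t j + ∑ j ∈ S, f j := by
    intro t S
    rw [← Finset.sum_add_distrib]
    exact Finset.sum_congr rfl fun j _ => hpt t j
  -- the main induction
  have main : ∀ t : ℕ, InCore wu (xt t) := by
    intro t
    induction t with
    | zero =>
        have hxt0 : xt 0 = x0 := by funext j; simp [hxt]
        rw [hxt0]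
        exact key x0 hx0sum (heq ▸ (⟨v, hvsel, hx0⟩ : x0 ∈ selectionCore wl wu))
    | succ t ih =>
        have hsum' : (∑ j, xt (t + 1) j) = wu Finset.univ := by
          rw [hsumstep t Finset.univ, hfsum_univ, ih.1]; ring
        have hcore : InCore v (xt (t + 1)) := by
          refine ⟨hvuniv ▸ hsum', fun S => ?_⟩
          by_cases hSu : S = Finset.univ
          · rw [hSu, hv]; simp only [if_pos rfl]
            exact le_of_eq hsum'.symm
          · have hvS : v S = wl S := by simp [hv, hSu]
            rw [hvS, hsumstep t S]
            rcases S.eq_empty_or_nonempty with h | h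
            · simp [h, hl0]
            · have h1 : wu S ≤ ∑ j ∈ S, xt t j := ih.2 S
              have h2 := hεle S h
              have h3 := hfsum_ge S
              linarith
        exact key _ hsum' (heq ▸ (⟨v, hvsel, hcore⟩ : xt (t + 1) ∈ selectionCore wl wu))
  -- derive the contradiction
  obtain ⟨t, ht⟩ := exists_nat_gt ((x0 k - wu {k}) / ε)
  have h1 : wu {k} ≤ ∑ j ∈ ({k} : Finset N), xt t j := (main t).2 {k}
  have hfk : f k = -ε := by simp [hf, (Ne.symm hik : k ≠ i)]
  have h2 : ∑ j ∈ ({k} : Finset N), xt t j = x0 k - t * ε := by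
    rw [Finset.sum_singleton, hxt]
    simp [hfk]
    ring
  have ht' : x0 k - wu {k} < t * ε := by
    rwa [div_lt_iff₀ hεpos] at ht
  linarith [h1, h2 ▸ h1]
end

section
/- Every selection convex cooperative interval game w on a finite player set N with |N| ≥ 2 satisfying w̄(S) − w̲(S) > 0 for every nonempty coalition S ⊆ N is not core-coincident, i.e. gen(𝒞(w)) ≠ SC(w). -/
open Finset

variable {N : Type*} [Fintype N] [DecidableEq N]

/-- For a convex game `v` with `v ∅ = 0`, the marginal vector with player `j` placed
last is in the core, and the coalition of the remaining players gets exactly its worth. -/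
lemma exists_core_prefix {N : Type*} [Fintype N] [DecidableEq N]
    (v : Finset N → ℝ) (hv0 : v ∅ = 0) (hconv : IsConvexGame v) (j : N) :
    ∃ x : N → ℝ, InCore v x ∧
      ∑ i ∈ Finset.univ.erase j, x i = v (Finset.univ.erase j) := by
  classical
  set n := Fintype.card N with hn
  have hn1 : 1 ≤ n := Fintype.card_pos_iff.mpr ⟨j⟩
  obtain e0 := Fintype.equivFin N
  set lastI : Fin n := ⟨n - 1, by omega⟩ with hlastI
  set e : N ≃ Fin n := e0.trans (Equiv.swap (e0 j) lastI) with he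
  have hej : e j = lastI := by simp [he, Equiv.swap_apply_left]
  set idx : N → ℕ := fun i => (e i : ℕ) with hidx
  have idx_lt : ∀ i, idx i < n := fun i => (e i).isLt
  have idx_inj : Function.Injective idx := fun a b h => e.injective (Fin.ext h)
  set P : ℕ → Finset N := fun k => Finset.univ.filter (fun i => idx i < k) with hP
  have hmem : ∀ k i, i ∈ P k ↔ idx i < k := by intro k i; simp [hP]
  have hP0 : P 0 = ∅ := by ext i; simp [hmem]
  have hPn : ∀ k, n ≤ k → P k = Finset.univ := by
    intro k hk; ext i; simp only [hmem, Finset.mem_univ, iff_true]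
    exact lt_of_lt_of_le (idx_lt i) hk
  have ha_idx : ∀ (k : ℕ) (hk : k < n), idx (e.symm ⟨k, hk⟩) = k := by
    intro k hk; simp [hidx]
  have hstep : ∀ (k : ℕ) (hk : k < n), P (k + 1) = insert (e.symm ⟨k, hk⟩) (P k) := by
    intro k hk
    ext i
    simp only [hmem, Finset.mem_insert]
    constructor
    · intro h
      rcases Nat.lt_succ_iff_lt_or_eq.mp h with h' | h'
      · exact Or.inr h'
      · left
        rw [← e.symm_apply_apply i]
        congr 1
        exact Fin.ext h'
    · rintro (rfl | h)
      · rw [ha_idx k hk]; omega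
      · omega
  set x : N → ℝ := fun i => v (P (idx i + 1)) - v (P (idx i)) with hx
  have hxa : ∀ (k : ℕ) (hk : k < n), x (e.symm ⟨k, hk⟩) = v (P (k + 1)) - v (P k) := by
    intro k hk; rw [hx]; simp only; rw [ha_idx k hk]
  have hanotin : ∀ (k : ℕ) (hk : k < n), e.symm ⟨k, hk⟩ ∉ P k := by
    intro k hk h
    rw [hmem, ha_idx k hk] at h
    omega
  -- prefix sums
  have hsum : ∀ k, ∑ i ∈ P k, x i = v (P k) := by
    intro k
    induction k with
    | zero => rw [hP0, Finset.sum_empty, hv0]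
    | succ k ih =>
      by_cases hk : k < n
      · rw [hstep k hk, Finset.sum_insert (hanotin k hk), hxa k hk, ih, ← hstep k hk]
        ring
      · have h1 : P (k + 1) = P k := by
          rw [hPn k (le_of_not_gt hk), hPn (k + 1) (by omega)]
        rw [h1, ih]
  -- core inequalities
  have hcore : ∀ (S : Finset N) (k : ℕ), v (S ∩ P k) ≤ ∑ i ∈ S ∩ P k, x i := by
    intro S k
    induction k with
    | zero => rw [hP0, Finset.inter_empty, Finset.sum_empty, hv0]
    | succ k ih =>
      by_cases hk : k < n
      · set a := e.symm ⟨k, hk⟩ with haa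
        by_cases haS : a ∈ S
        · have h1 : S ∩ P (k + 1) = insert a (S ∩ P k) := by
            rw [hstep k hk]
            ext i
            have hai : i = a → i ∈ S := fun h => by rw [h]; exact haS
            simp only [Finset.mem_inter, Finset.mem_insert]
            tauto
          have hanot : a ∉ S ∩ P k := fun h => hanotin k hk (Finset.mem_inter.mp h).2
          have hconv' := hconv (S ∩ P (k + 1)) (P k)
          have hunion : (S ∩ P (k + 1)) ∪ P k = P (k + 1) := by
            rw [h1, hstep k hk]
            ext i
            simp only [Finset.mem_union, Finset.mem_insert, Finset.mem_inter]
            tauto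
          have hinter : (S ∩ P (k + 1)) ∩ P k = S ∩ P k := by
            rw [h1]
            ext i
            have hai : i = a → i ∉ P k := fun hia => hia ▸ hanotin k hk
            simp only [Finset.mem_inter, Finset.mem_insert]
            tauto
          rw [hunion, hinter] at hconv'
          rw [h1, Finset.sum_insert hanot, hxa k hk]
          rw [h1] at hconv'
          linarith [ih]
        · have h1 : S ∩ P (k + 1) = S ∩ P k := by
            rw [hstep k hk]
            ext i
            have hai : i = a → i ∉ S := fun hia => hia ▸ haS
            simp only [Finset.mem_inter, Finset.mem_insert]
            tauto
          rw [h1]; exact ih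
      · have h1 : P (k + 1) = P k := by
          rw [hPn k (le_of_not_gt hk), hPn (k + 1) (by omega)]
        rw [h1]; exact ih
  have hPuniv : P n = Finset.univ := hPn n le_rfl
  have hidxj : idx j = n - 1 := by rw [hidx]; simp only; rw [hej]
  have hPerase : P (n - 1) = Finset.univ.erase j := by
    ext i
    simp only [hmem, Finset.mem_erase, Finset.mem_univ, and_true]
    constructor
    · intro h hij
      rw [hij, hidxj] at h
      omega
    · intro h
      have h2 : idx i ≠ n - 1 := fun hc => h (idx_inj (hc.trans hidxj.symm))
      have := idx_lt i
      omega
  refine ⟨x, ⟨?_, ?_⟩, ?_⟩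
  · rw [← hPuniv, hsum n, hPuniv]
  · intro S
    have := hcore S n
    rw [hPuniv, Finset.inter_univ] at this
    exact this
  · rw [← hPerase, hsum (n - 1), hPerase]

theorem selection_convex_not_core_coincident (wl wu : Finset N → ℝ)
    (hw : IsIntervalGame wl wu) (hcard : 2 ≤ Fintype.card N)
    (hpos : ∀ S : Finset N, S.Nonempty → 0 < wu S - wl S)
    (hconv : ∀ v, IsSelection wl wu v → IsConvexGame v) :
    genIntervalCore wl wu ≠ selectionCore wl wu := by
  classical
  intro hEq
  have hNne : Nonempty N := Fintype.card_pos_iff.mp (by omega)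
  obtain ⟨j⟩ := hNne
  set T : Finset N := Finset.univ.erase j with hT
  have hTcard : T.card = Fintype.card N - 1 := by
    rw [hT, Finset.card_erase_of_mem (Finset.mem_univ j), Finset.card_univ]
  have hTne : T.Nonempty := by
    rw [← Finset.card_pos, hTcard]; omega
  have hTneq : T ≠ Finset.univ := by
    intro h
    have := Finset.mem_univ j
    rw [← h] at this
    exact (Finset.notMem_erase j Finset.univ) this
  set v : Finset N → ℝ := fun S => if S = T then wl T else wu S with hv
  have hv0 : v ∅ = 0 := by
    rw [hv]
    simp only
    rw [if_neg (fun h => hTne.ne_empty h.symm)]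
    exact hw.2.2
  have hvT : v T = wl T := by rw [hv]; simp
  have hsel : IsSelection wl wu v := by
    refine ⟨hv0, fun S => ?_⟩
    by_cases h : S = T
    · rw [h, hvT]
      exact ⟨le_rfl, hw.1 T⟩
    · have hvS : v S = wu S := by rw [hv]; exact if_neg h
      rw [hvS]
      exact ⟨hw.1 S, le_rfl⟩
  have hvuniv : v Finset.univ = wu Finset.univ := by
    rw [hv]; exact if_neg (fun h => hTneq h.symm)
  obtain ⟨x, hxcore, hxT⟩ := exists_core_prefix v hv0 (hconv v hsel) j
  have hxsel : x ∈ selectionCore wl wu := ⟨v, hsel, hxcore⟩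
  rw [← hEq] at hxsel
  obtain ⟨Xl, Xu, hle, hsl, hsu, hS, hbounds⟩ := hxsel
  have hsumx : ∑ i, x i = wu Finset.univ := hxcore.1.trans hvuniv
  have hzero : ∑ i, (Xu i - x i) = 0 := by
    rw [Finset.sum_sub_distrib, hsu, hsumx, sub_self]
  have hXux : ∀ i, Xu i = x i := by
    intro i
    have h := (Finset.sum_eq_zero_iff_of_nonneg
      (fun i _ => sub_nonneg.mpr (hbounds i).2)).mp hzero i (Finset.mem_univ i)
    linarith [sub_eq_zero.mp h]
  have hTXu : wu T ≤ ∑ i ∈ T, Xu i := (hS T hTne).2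
  have hsumT : ∑ i ∈ T, Xu i = wl T := by
    have h1 : ∑ i ∈ T, Xu i = ∑ i ∈ T, x i := Finset.sum_congr rfl (fun i _ => hXux i)
    rw [h1]
    exact hxT.trans hvT
  have := hpos T hTne
  rw [hsumT] at hTXu
  linarith
end

section
/- Every convex interval game w on a finite player set N with |N| ≥ 2 satisfying w̄(S) − w̲(S) > 0 for every nonempty coalition S ⊆ N is not core-coincident, i.e. gen(𝒞(w)) ≠ SC(w). -/
open Finset

variable {N : Type*} [Fintype N] [DecidableEq N]

lemma supermod_step {v : Finset N → ℝ} (hv : IsConvexGame v) {A B : Finset N} {i : N}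
    (hAB : A ⊆ B) (hi : i ∉ B) :
    v (insert i A) - v A ≤ v (insert i B) - v B := by
  have h := hv (insert i A) B
  have h1 : insert i A ∪ B = insert i B := by
    rw [Finset.insert_union, Finset.union_eq_right.mpr hAB]
  have h2 : insert i A ∩ B = A := by
    rw [Finset.insert_inter_of_notMem hi, Finset.inter_eq_left.mpr hAB]
  rw [h1, h2] at h
  linarith

/-- Predecessor set of `i` under the rank function `r`. -/
def margP (r : N → ℕ) (i : N) : Finset N := univ.filter (fun j => r j < r i)

/-- Marginal vector of the game `wl` with respect to the rank function `r`. -/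
noncomputable def margY (wl : Finset N → ℝ) (r : N → ℕ) (i : N) : ℝ :=
  wl (insert i (margP r i)) - wl (margP r i)

lemma margY_core {wl : Finset N → ℝ} (hconv : IsConvexGame wl) (h0 : wl ∅ = 0)
    {r : N → ℕ} (hr : Function.Injective r) (S : Finset N) :
    wl S ≤ ∑ i ∈ S, margY wl r i := by
  induction S using Finset.strongInduction with
  | _ S ih =>
    rcases S.eq_empty_or_nonempty with rfl | hS
    · simp [h0]
    · obtain ⟨i, hiS, hmax⟩ := S.exists_max_image r hS
      have hsub : S.erase i ⊆ margP r i := by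
        intro j hj
        rw [Finset.mem_erase] at hj
        simp only [margP, Finset.mem_filter, Finset.mem_univ, true_and]
        exact lt_of_le_of_ne (hmax j hj.2) (fun h => hj.1 (hr h))
      have hiP : i ∉ margP r i := by simp [margP]
      have hstep : wl S - wl (S.erase i) ≤ margY wl r i := by
        have h := supermod_step hconv hsub hiP
        rwa [Finset.insert_erase hiS] at h
      have hrec := ih (S.erase i) (Finset.erase_ssubset hiS)
      have hstep' : wl S - wl (S.erase i) ≤ margY wl r i := hstep
      rw [← Finset.sum_erase_add S _ hiS]
      linarith

lemma margY_total (wl : Finset N → ℝ) (h0 : wl ∅ = 0)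
    (e : N ≃ Fin (Fintype.card N)) :
    ∑ i, margY wl (fun i => (e i : ℕ)) i = wl univ := by
  set r : N → ℕ := fun i => (e i : ℕ) with hrdef
  have key : ∀ m, m ≤ Fintype.card N →
      ∑ i ∈ univ.filter (fun j => r j < m), margY wl r i
        = wl (univ.filter (fun j => r j < m)) := by
    intro m
    induction m with
    | zero => intro _; simp [h0]
    | succ m ihm =>
      intro hm
      have hm' : m < Fintype.card N := by omega
      set i : N := e.symm ⟨m, hm'⟩ with hi
      have hri : r i = m := by simp [hrdef, hi]
      have hQ : univ.filter (fun j => r j < m + 1)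
          = insert i (univ.filter (fun j => r j < m)) := by
        ext j
        simp only [Finset.mem_filter, Finset.mem_univ, true_and, Finset.mem_insert]
        constructor
        · intro hj
          rcases Nat.lt_succ_iff_lt_or_eq.mp hj with h | h
          · exact Or.inr h
          · left
            have hval : (e j : ℕ) = (e i : ℕ) := by
              have : r j = m := h
              simp only [hrdef] at this hri ⊢
              omega
            exact e.injective (Fin.ext hval)
        · rintro (rfl | hj)
          · omega
          · omega
      have hiQ : i ∉ univ.filter (fun j => r j < m) := by
        simp [hri]
      have hP : margP r i = univ.filter (fun j => r j < m) := by
        simp only [margP, hri]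
      rw [hQ, Finset.sum_insert hiQ, ihm (by omega)]
      have hmy : margY wl r i = wl (insert i (univ.filter fun j => r j < m))
          - wl (univ.filter fun j => r j < m) := by
        rw [margY, hP]
      rw [hmy]; ring
  have huniv : univ.filter (fun j => r j < Fintype.card N) = (univ : Finset N) := by
    ext j
    simp only [Finset.mem_filter, Finset.mem_univ, true_and, iff_true]
    exact (e j).isLt
  have h := key (Fintype.card N) le_rfl
  rwa [huniv] at h

theorem convex_interval_game_not_core_coincident (wl wu : Finset N → ℝ)
    (hw : IsIntervalGame wl wu) (hcard : 2 ≤ Fintype.card N)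
    (hpos : ∀ S : Finset N, S.Nonempty → 0 < wu S - wl S)
    (hlconv : IsConvexGame wl) (huconv : IsConvexGame wu)
    (hlenconv : IsConvexGame (fun S => wu S - wl S)) :
    genIntervalCore wl wu ≠ selectionCore wl wu := by
  obtain ⟨hle, hl0, hu0⟩ := hw
  have hpos' : (0 : ℕ) < Fintype.card N := by omega
  have hNE : Nonempty N := Fintype.card_pos_iff.mp hpos'
  obtain ⟨j, k, hjk⟩ := Fintype.one_lt_card_iff.mp (by omega : 1 < Fintype.card N)
  let e0 := Fintype.equivFin N
  let e : N ≃ Fin (Fintype.card N) := e0.trans (Equiv.swap (e0 k) ⟨0, hpos'⟩)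
  have hek : e k = ⟨0, hpos'⟩ := by simp [e, Equiv.swap_apply_left]
  set r : N → ℕ := fun i => (e i : ℕ) with hrdef
  have hrinj : Function.Injective r := fun a b h => e.injective (Fin.ext h)
  set y : N → ℝ := margY wl r with hydef
  have hcore : ∀ S, wl S ≤ ∑ i ∈ S, y i := margY_core hlconv hl0 hrinj
  have htot : ∑ i, y i = wl univ := margY_total wl hl0 e
  have hyk : y k = wl {k} := by
    have hPk : margP r k = ∅ := by
      ext j'
      simp [margP, hrdef, hek]
    simp [hydef, margY, hPk, hl0]
  have hNuniv : (univ : Finset N).Nonempty := Finset.univ_nonempty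
  have hd : 0 < wu univ - wl univ := hpos univ hNuniv
  set x : N → ℝ := fun i => y i + if i = j then wu univ - wl univ else 0 with hxdef
  have hsumx : ∑ i, x i = wu univ := by
    simp only [hxdef, Finset.sum_add_distrib, htot, Finset.sum_ite_eq',
      Finset.mem_univ, if_true]
    ring
  have hxS : ∀ S : Finset N, wl S ≤ ∑ i ∈ S, x i := by
    intro S
    refine le_trans (hcore S) (Finset.sum_le_sum ?_)
    intro i _
    simp only [hxdef]
    split <;> linarith
  have hxk : x k = wl {k} := by
    simp only [hxdef, if_neg (Ne.symm hjk)]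
    rw [hyk]; ring
  intro heq
  have hxSC : x ∈ selectionCore wl wu := by
    refine ⟨fun S => if S = univ then wu univ else wl S, ⟨?_, ?_⟩, ?_, ?_⟩
    · show (if (∅ : Finset N) = univ then wu univ else wl ∅) = 0
      rw [if_neg (Ne.symm hNuniv.ne_empty)]
      exact hl0
    · intro S
      show wl S ≤ (if S = univ then wu univ else wl S) ∧
        (if S = univ then wu univ else wl S) ≤ wu S
      by_cases hS : S = univ
      · subst hS
        simp only [if_pos rfl]
        exact ⟨hle univ, le_refl _⟩
      · simp only [if_neg hS]
        exact ⟨le_refl _, hle S⟩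
    · show (∑ i, x i) = if (univ : Finset N) = univ then wu univ else wl univ
      rw [if_pos rfl, hsumx]
    · intro S
      show (if S = univ then wu univ else wl S) ≤ ∑ i ∈ S, x i
      by_cases hS : S = univ
      · subst hS
        rw [if_pos rfl, hsumx]
      · rw [if_neg hS]
        exact hxS S
  rw [← heq] at hxSC
  obtain ⟨Xl, Xu, hXlu, hXlsum, hXusum, hXS, hXx⟩ := hxSC
  have hxeq : ∀ i ∈ (univ : Finset N), x i = Xu i := by
    have hle' : ∀ i ∈ (univ : Finset N), x i ≤ Xu i := fun i _ => (hXx i).2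
    have hsum : ∑ i, x i = ∑ i, Xu i := by rw [hsumx, hXusum]
    exact (Finset.sum_eq_sum_iff_of_le hle').mp hsum
  have hku : wu {k} ≤ ∑ i ∈ ({k} : Finset N), Xu i :=
    (hXS {k} ⟨k, Finset.mem_singleton_self k⟩).2
  rw [Finset.sum_singleton, ← hxeq k (Finset.mem_univ k), hxk] at hku
  have := hpos {k} ⟨k, Finset.mem_singleton_self k⟩
  linarith
end

section
/- For every cooperative interval game w on a finite player set N with |N| = n and every player i ∈ N, the set {φ_i(v) : v a selection of w} equals the closed interval Φ*_i(w), i.e. {φ_i(v) : v a selection of w} = [Σ_{S⊆N∖{i}} c_S (w̲(S∪{i}) − w̄(S)), Σ_{S⊆N∖{i}} c_S (w̄(S∪{i}) − w̲(S))], where c_S = |S|!(n−|S|−1)!/n!. -/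
open Finset

variable {N : Type*} [Fintype N] [DecidableEq N]

lemma shapleyCoeff_nonneg (n k : ℕ) : 0 ≤ shapleyCoeff n k := by
  unfold shapleyCoeff
  positivity

theorem shapley_selections_eq_interval (wl wu : Finset N → ℝ)
    (hw : IsIntervalGame wl wu) (i : N) :
    {y : ℝ | ∃ v, IsSelection wl wu v ∧ shapley v i = y} =
      Set.Icc (phiLow wl wu i) (phiHigh wl wu i) := by
  obtain ⟨hle, hl0, hu0⟩ := hw
  ext y
  simp only [Set.mem_setOf_eq, Set.mem_Icc]
  constructor
  · rintro ⟨v, ⟨hv0, hvb⟩, rfl⟩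
    constructor
    · apply Finset.sum_le_sum
      intro S hS
      have hc := shapleyCoeff_nonneg (Fintype.card N) S.card
      have h1 := (hvb (insert i S)).1
      have h2 := (hvb S).2
      nlinarith
    · apply Finset.sum_le_sum
      intro S hS
      have hc := shapleyCoeff_nonneg (Fintype.card N) S.card
      have h1 := (hvb (insert i S)).2
      have h2 := (hvb S).1
      nlinarith
  · rintro ⟨hy1, hy2⟩
    set L := phiLow wl wu i with hL
    set H := phiHigh wl wu i with hH
    have hLH : L ≤ H := le_trans hy1 hy2
    -- choose t
    by_cases hEq : L = H
    · -- degenerate: use vlo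
      refine ⟨fun S => if i ∈ S then wl S else wu S, ⟨?_, ?_⟩, ?_⟩
      · simp [hu0]
      · intro S
        by_cases h : i ∈ S <;> simp [h, hle S]
      · have : shapley (fun S => if i ∈ S then wl S else wu S) i = L := by
          rw [hL]
          unfold shapley phiLow
          apply Finset.sum_congr rfl
          intro S hS
          have hiS : i ∉ S := fun h =>
            (Finset.mem_erase.mp ((Finset.mem_powerset.mp hS) h)).1 rfl
          simp [hiS]
        rw [this]
        linarith
    · have hlt : L < H := lt_of_le_of_ne hLH hEq
      set t : ℝ := (y - L) / (H - L) with ht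
      have hd : 0 < H - L := by linarith
      have ht0 : 0 ≤ t := div_nonneg (by linarith) (le_of_lt hd)
      have ht1 : t ≤ 1 := by
        rw [ht, div_le_one hd]; linarith
      refine ⟨fun S => (1 - t) * (if i ∈ S then wl S else wu S)
          + t * (if i ∈ S then wu S else wl S), ⟨?_, ?_⟩, ?_⟩
      · simp [hu0, hl0]
      · intro S
        by_cases h : i ∈ S <;> simp only [h, if_pos, if_neg, if_true, if_false] <;>
          constructor <;> nlinarith [hle S]
      · have key : shapley (fun S => (1 - t) * (if i ∈ S then wl S else wu S)
            + t * (if i ∈ S then wu S else wl S)) i = (1 - t) * L + t * H := by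
          rw [hL, hH]
          unfold shapley phiLow phiHigh
          rw [Finset.mul_sum, Finset.mul_sum, ← Finset.sum_add_distrib]
          apply Finset.sum_congr rfl
          intro S hS
          have hiS : i ∉ S := fun h =>
            (Finset.mem_erase.mp ((Finset.mem_powerset.mp hS) h)).1 rfl
          simp only [hiS, Finset.mem_insert_self, if_true, if_false, if_pos, if_neg,
            not_false_iff]
          ring
        rw [key, ht]
        field_simp
        ring
end

section
/- The interval Shapley value extension Φ* satisfies the axioms IEFF, TNP, SYM and ADD: for every cooperative interval game w on a finite player set N, (IEFF) Σ_{i∈N} mid(Φ*_i(w)) = mid(w(N)); (TNP) Φ*_i(w) = [0,0] for every total null player i of w; (SYM) Φ*_i(w) = Φ*_j(w) for all symmetric players i, j of w; and (ADD) Φ*(v + w) = Φ*(v) + Φ*(w) (componentwise interval addition) for all interval games v, w on N. -/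
open Finset

variable {N : Type*} [Fintype N] [DecidableEq N]

/-! `phiLow + phiHigh` is the classical Shapley value of the game `wl + wu`, so IEFF is Shapley
efficiency: summing marginal contributions over all players, the coefficient of `v T` is
`|T| c(|T|-1) - (n-|T|) c(|T|)`, which telescopes to `[T = N] - [T = ∅]`. TNP and ADD hold termwise.
For SYM, the Shapley-type sum is equivariant under relabelling the players, and the border games of a
game in which `i` and `j` are symmetric are invariant under the transposition of `i` and `j`. -/

theorem card_mul_shapleyCoeff_pred_sub {n k : ℕ} (hk : k ≤ n) :
    (k : ℝ) * shapleyCoeff n (k - 1) - ((n - k : ℕ) : ℝ) * shapleyCoeff n k =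
      (if k = n then 1 else 0) - (if k = 0 then 1 else 0) := by
  have hpred : 0 < k → (k : ℝ) * shapleyCoeff n (k - 1) =
      (k.factorial * (n - k).factorial : ℝ) / n.factorial := fun hk0 => by
    rw [shapleyCoeff, show n - (k - 1) - 1 = n - k by omega, ← Nat.mul_factorial_pred hk0.ne']
    push_cast
    ring
  have hsucc : k < n → ((n - k : ℕ) : ℝ) * shapleyCoeff n k =
      (k.factorial * (n - k).factorial : ℝ) / n.factorial := fun hkn => by
    rw [shapleyCoeff, ← Nat.mul_factorial_pred (n := n - k) (by omega)]
    push_cast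
    ring
  rcases k.eq_zero_or_pos with rfl | hk0 <;> rcases hk.lt_or_eq with hkn | rfl
  · simp only [hsucc hkn]
    simp [hkn.ne, Nat.factorial_ne_zero]
  · simp
  · simp [hpred hk0, hsucc hkn, hkn.ne, hk0.ne']
  · simp [hpred hk0, hk0.ne', Nat.factorial_ne_zero]

theorem sum_sum_powerset_erase {M : Type*} [AddCommMonoid M] (f : Finset N → M) :
    ∑ i, ∑ S ∈ (univ.erase i).powerset, f S = ∑ S, Sᶜ.card • f S := by
  simp_rw [← sum_const]
  exact sum_comm' fun i S => by simp [subset_erase]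

theorem sum_sum_powerset_erase_insert {M : Type*} [AddCommMonoid M] (f : ℕ → Finset N → M) :
    ∑ i, ∑ S ∈ (univ.erase i).powerset, f S.card (insert i S) =
      ∑ T, T.card • f (T.card - 1) T := by
  have h (i : N) : ∑ S ∈ (univ.erase i).powerset, f S.card (insert i S) =
      ∑ T with i ∈ T, f (T.card - 1) T :=
    sum_nbij' (insert i) (erase · i) (by simp [subset_erase]) (by simp [subset_erase])
      (by simp [subset_erase]) (fun T hT => insert_erase (by simpa using hT))
      (fun S hS => by simp_all [subset_erase])
  simp_rw [h, ← sum_const]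
  exact sum_comm' fun i T => by simp

theorem sum_shapley (v : Finset N → ℝ) : ∑ i, shapley v i = v univ - v ∅ := by
  calc ∑ i, shapley v i
      = ∑ i, ∑ S ∈ (univ.erase i).powerset,
            shapleyCoeff (Fintype.card N) S.card * v (insert i S) -
          ∑ i, ∑ S ∈ (univ.erase i).powerset, shapleyCoeff (Fintype.card N) S.card * v S := by
        simp only [shapley, mul_sub, sum_sub_distrib]
    _ = ∑ T, ((T.card : ℝ) * shapleyCoeff (Fintype.card N) (T.card - 1) -
          ((Fintype.card N - T.card : ℕ) : ℝ) * shapleyCoeff (Fintype.card N) T.card) * v T := by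
        rw [sum_sum_powerset_erase_insert (fun k T => shapleyCoeff _ k * v T),
          sum_sum_powerset_erase, ← sum_sub_distrib]
        simp only [card_compl, nsmul_eq_mul, sub_mul, mul_assoc]
    _ = ∑ T : Finset N, ((if T = univ then v T else 0) - if T = ∅ then v T else 0) := by
        refine sum_congr rfl fun T _ => ?_
        simp only [card_mul_shapleyCoeff_pred_sub T.card_le_univ, card_eq_iff_eq_univ,
          card_eq_zero]
        split_ifs <;> ring
    _ = v univ - v ∅ := by simp [sum_sub_distrib]

/-- `phiLow`, `phiHigh` and `shapley` are all of this form. -/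
noncomputable def shapleySum (F : Finset N → Finset N → ℝ) (i : N) : ℝ :=
  ∑ S ∈ (univ.erase i).powerset, shapleyCoeff (Fintype.card N) S.card * F (insert i S) S

theorem shapleySum_map_equiv (σ : Equiv.Perm N) (F : Finset N → Finset N → ℝ) (i : N) :
    shapleySum (fun T S => F (T.map σ.toEmbedding) (S.map σ.toEmbedding)) i =
      shapleySum F (σ i) :=
  sum_equiv σ.finsetCongr (fun S => by simp [subset_erase])
    (fun S _ => by simp [map_insert])

theorem Finset.map_swap_of_mem_iff {α : Type*} [DecidableEq α] {a b : α} {s : Finset α}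
    (h : a ∈ s ↔ b ∈ s) : s.map (Equiv.swap a b).toEmbedding = s := by
  ext x
  simp only [mem_map_equiv, Equiv.symm_swap, Equiv.swap_apply_def]
  split_ifs <;> simp_all

theorem Finset.map_swap_insert {α : Type*} [DecidableEq α] {a b : α} {s : Finset α}
    (ha : a ∉ s) (hb : b ∉ s) : (insert a s).map (Equiv.swap a b).toEmbedding = insert b s := by
  ext x
  simp only [mem_map_equiv, Equiv.symm_swap, mem_insert, Equiv.swap_apply_def]
  split_ifs <;> grind

theorem apply_map_swap_eq_of_symmetric {v : Finset N → ℝ} {i j : N}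
    (h : ∀ S ⊆ univ \ {i, j}, v (insert i S) = v (insert j S)) (T : Finset N) :
    v (T.map (Equiv.swap i j).toEmbedding) = v T := by
  have avoids {S : Finset N} (hi : i ∉ S) (hj : j ∉ S) : S ⊆ univ \ {i, j} := by
    intro x hx
    simp only [mem_sdiff, mem_univ, mem_insert, mem_singleton, true_and]
    rintro (rfl | rfl) <;> contradiction
  by_cases hi : i ∈ T <;> by_cases hj : j ∈ T
  · rw [map_swap_of_mem_iff (iff_of_true hi hj)]
  · have hj' : j ∉ T.erase i := fun h => hj (mem_of_mem_erase h)
    rw [← insert_erase hi, map_swap_insert (notMem_erase i T) hj',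
      h _ (avoids (notMem_erase i T) hj')]
  · have hi' : i ∉ T.erase j := fun h => hi (mem_of_mem_erase h)
    rw [← insert_erase hj, Equiv.swap_comm, map_swap_insert (notMem_erase j T) hi',
      h _ (avoids hi' (notMem_erase j T))]
  · rw [map_swap_of_mem_iff (iff_of_false hi hj)]

theorem shapleySum_eq_of_map_swap {F : Finset N → Finset N → ℝ} {i j : N}
    (hF : ∀ T S, F (T.map (Equiv.swap i j).toEmbedding) (S.map (Equiv.swap i j).toEmbedding) =
      F T S) :
    shapleySum F i = shapleySum F j := by
  simpa only [hF, Equiv.swap_apply_left] using shapleySum_map_equiv (Equiv.swap i j) F i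

theorem phiLow_add_phiHigh (wl wu : Finset N → ℝ) (i : N) :
    phiLow wl wu i + phiHigh wl wu i = shapley (fun S => wl S + wu S) i := by
  rw [phiLow, phiHigh, shapley, ← sum_add_distrib]
  exact sum_congr rfl fun S _ => by ring

theorem phiLow_eq_zero_of_forall {wl wu : Finset N → ℝ} {i : N}
    (h : ∀ S ⊆ univ.erase i, wl (insert i S) = wu S) : phiLow wl wu i = 0 :=
  sum_eq_zero fun S hS => by rw [h S (mem_powerset.1 hS), sub_self, mul_zero]

theorem phiHigh_eq_zero_of_forall {wl wu : Finset N → ℝ} {i : N}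
    (h : ∀ S ⊆ univ.erase i, wu (insert i S) = wl S) : phiHigh wl wu i = 0 :=
  sum_eq_zero fun S hS => by rw [h S (mem_powerset.1 hS), sub_self, mul_zero]

theorem phiLow_eq_of_symmetric {wl wu : Finset N → ℝ} {i j : N}
    (hl : ∀ S ⊆ univ \ {i, j}, wl (insert i S) = wl (insert j S))
    (hu : ∀ S ⊆ univ \ {i, j}, wu (insert i S) = wu (insert j S)) :
    phiLow wl wu i = phiLow wl wu j :=
  shapleySum_eq_of_map_swap (F := fun T S => wl T - wu S) fun T S => by
    rw [apply_map_swap_eq_of_symmetric hl, apply_map_swap_eq_of_symmetric hu]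

theorem phiHigh_eq_of_symmetric {wl wu : Finset N → ℝ} {i j : N}
    (hl : ∀ S ⊆ univ \ {i, j}, wl (insert i S) = wl (insert j S))
    (hu : ∀ S ⊆ univ \ {i, j}, wu (insert i S) = wu (insert j S)) :
    phiHigh wl wu i = phiHigh wl wu j :=
  shapleySum_eq_of_map_swap (F := fun T S => wu T - wl S) fun T S => by
    rw [apply_map_swap_eq_of_symmetric hl, apply_map_swap_eq_of_symmetric hu]

theorem phiLow_add (vl vu wl wu : Finset N → ℝ) (i : N) :
    phiLow (fun S => vl S + wl S) (fun S => vu S + wu S) i = phiLow vl vu i + phiLow wl wu i := by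
  rw [phiLow, phiLow, phiLow, ← sum_add_distrib]
  exact sum_congr rfl fun S _ => by ring

theorem phiHigh_add (vl vu wl wu : Finset N → ℝ) (i : N) :
    phiHigh (fun S => vl S + wl S) (fun S => vu S + wu S) i =
      phiHigh vl vu i + phiHigh wl wu i := by
  rw [phiHigh, phiHigh, phiHigh, ← sum_add_distrib]
  exact sum_congr rfl fun S _ => by ring

theorem interval_shapley_extension_axioms :
    -- (IEFF) indifference efficiency
    (∀ wl wu : Finset N → ℝ, IsIntervalGame wl wu →
      (∑ i, (phiLow wl wu i + phiHigh wl wu i) / 2) =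
        (wl Finset.univ + wu Finset.univ) / 2) ∧
    -- (TNP) total null player property
    (∀ wl wu : Finset N → ℝ, IsIntervalGame wl wu → ∀ i : N,
      (∀ S : Finset N, S ⊆ Finset.univ.erase i →
        wl S = wu S ∧ wl (insert i S) = wl S ∧ wu (insert i S) = wl S) →
      phiLow wl wu i = 0 ∧ phiHigh wl wu i = 0) ∧
    -- (SYM) symmetry
    (∀ wl wu : Finset N → ℝ, IsIntervalGame wl wu → ∀ i j : N,
      (∀ S : Finset N, S ⊆ Finset.univ \ {i, j} →
        wl (insert i S) = wl (insert j S) ∧ wu (insert i S) = wu (insert j S)) →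
      phiLow wl wu i = phiLow wl wu j ∧ phiHigh wl wu i = phiHigh wl wu j) ∧
    -- (ADD) additivity
    (∀ vl vu wl wu : Finset N → ℝ, IsIntervalGame vl vu → IsIntervalGame wl wu →
      ∀ i : N,
        phiLow (fun S => vl S + wl S) (fun S => vu S + wu S) i =
          phiLow vl vu i + phiLow wl wu i ∧
        phiHigh (fun S => vl S + wl S) (fun S => vu S + wu S) i =
          phiHigh vl vu i + phiHigh wl wu i) := by
  refine ⟨fun wl wu hw => ?_, fun wl wu _ i h => ?_, fun wl wu _ i j h => ?_,
    fun vl vu wl wu _ _ i => ⟨phiLow_add vl vu wl wu i, phiHigh_add vl vu wl wu i⟩⟩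
  · rw [← sum_div]
    simp only [phiLow_add_phiHigh, sum_shapley, hw.2.1, hw.2.2, add_zero, sub_zero]
  · refine ⟨phiLow_eq_zero_of_forall fun S hS => ?_, phiHigh_eq_zero_of_forall fun S hS => ?_⟩
    · obtain ⟨hSl, hSi, -⟩ := h S hS
      rw [hSi, hSl]
    · exact (h S hS).2.2
  · have hl S hS := (h S hS).1
    have hu S hS := (h S hS).2
    exact ⟨phiLow_eq_of_symmetric hl hu, phiHigh_eq_of_symmetric hl hu⟩
end

section
/- Let w be a selection convex cooperative interval game on a finite player set N. Then for every selection v of w, the Shapley value vector φ(v) = (φ_i(v))_{i∈N} belongs to the selection core SC(w); in particular φ(v) ∈ C(v). -/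
/-!
For a convex game the marginal contribution `v (insert i T) - v T` of a player grows with `T`.
Hence every marginal vector (the payoffs obtained when the players join one at a time in a fixed
order) lies in the core: it is efficient by telescoping, and on a coalition `S` each member is
paid at least its contribution to the members of `S` before it, which telescopes to `v S`.
Exactly `|S|! (n - |S| - 1)!` orderings place precisely `S` before `i`, so the Shapley value is
the average of the marginal vectors, and it lies in the core because the core is convex. A
selection of a selection convex game is convex, so its Shapley value lies in its core, hence in
the selection core.
-/

open Finset

variable {N : Type*} [Fintype N] [DecidableEq N]

theorem Fintype.card_equiv_comp_eq {α β γ : Type*} [Fintype α] [Fintype β] [Fintype γ]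
    [DecidableEq α] [DecidableEq β] [DecidableEq γ] (f : α → γ) (g : β → γ)
    (hfg : ∀ c, Fintype.card {b // g b = c} = Fintype.card {a // f a = c}) :
    Fintype.card {e : β ≃ α // f ∘ e = g}
      = ∏ c, (Fintype.card {a // f a = c}).factorial := by
  let e₀ : β ≃ α := Equiv.ofFiberEquiv fun c => Fintype.equivOfCardEq (hfg c)
  have he₀ : f ∘ e₀ = g := funext (Equiv.ofFiberEquiv_map _)
  rw [← DomMulAct.stabilizer_card]
  refine Fintype.card_congr (Equiv.subtypeEquiv (e₀.equivCongr (Equiv.refl α)) fun e => ?_)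
  rw [← he₀]
  constructor
  · intro h; ext a; simpa using congrFun h (e₀.symm a)
  · intro h; ext b; simpa using congrFun h (e₀ b)

omit [DecidableEq N] in
theorem convex_setOf_inCore (v : Finset N → ℝ) : Convex ℝ {x | InCore v x} := by
  rintro x ⟨hx, hxS⟩ y ⟨hy, hyS⟩ a b ha hb hab
  refine ⟨?_, fun S => ?_⟩
  · simp only [Pi.add_apply, Pi.smul_apply, smul_eq_mul, sum_add_distrib, ← mul_sum, hx, hy]
    rw [← add_mul, hab, one_mul]
  · simp only [Pi.add_apply, Pi.smul_apply, smul_eq_mul, sum_add_distrib, ← mul_sum]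
    calc v S = a * v S + b * v S := by rw [← add_mul, hab, one_mul]
      _ ≤ _ := add_le_add (mul_le_mul_of_nonneg_left (hxS S) ha)
          (mul_le_mul_of_nonneg_left (hyS S) hb)

section Orderings

variable {n : ℕ}

/-- An ordering of the players is an equivalence `π : Fin n ≃ N`, with `π m` in position `m`. -/
def predecessors (π : Fin n ≃ N) (i : N) : Finset N :=
  {j | π.symm j < π.symm i}

noncomputable def marginalVector (v : Finset N → ℝ) (π : Fin n ≃ N) (i : N) : ℝ :=
  v (insert i (predecessors π i)) - v (predecessors π i)

omit [DecidableEq N] in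
theorem val_symm_eq_card_predecessors (π : Fin n ≃ N) (i : N) :
    (π.symm i : ℕ) = #(predecessors π i) := by
  have : predecessors π i = (Iio (π.symm i)).map π.toEmbedding := by
    ext j
    simp [predecessors]
  rw [this, card_map, Fin.card_Iio]

omit [DecidableEq N] in
theorem self_notMem_predecessors (π : Fin n ≃ N) (i : N) : i ∉ predecessors π i := by
  simp [predecessors]

omit [Fintype N] in
theorem IsConvexGame.sub_le_sub_insert {v : Finset N → ℝ} (hv : IsConvexGame v)
    {A B : Finset N} {i : N} (hAB : A ⊆ B) (hiB : i ∉ B) :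
    v (insert i A) - v A ≤ v (insert i B) - v B := by
  have h := hv (insert i A) B
  rw [insert_union, union_eq_right.mpr hAB, insert_inter_of_notMem hiB,
    inter_eq_left.mpr hAB] at h
  linarith

theorem IsConvexGame.le_sum_marginalVector {v : Finset N → ℝ} (hv : IsConvexGame v)
    (hv₀ : v ∅ = 0) (π : Fin n ≃ N) (S : Finset N) :
    v S ≤ ∑ i ∈ S, marginalVector v π i := by
  induction S using Finset.strongInduction with
  | _ S ih =>
    rcases S.eq_empty_or_nonempty with rfl | hne
    · simp [hv₀]
    obtain ⟨i, hiS, hlast⟩ := S.exists_max_image π.symm hne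
    have hsub : S.erase i ⊆ predecessors π i := fun j hj => by
      rw [mem_erase] at hj
      simpa [predecessors] using lt_of_le_of_ne (hlast j hj.2) (π.symm.injective.ne hj.1)
    have hstep := hv.sub_le_sub_insert hsub (self_notMem_predecessors π i)
    rw [insert_erase hiS] at hstep
    change v S - v (S.erase i) ≤ marginalVector v π i at hstep
    have hrest := ih (S.erase i) (erase_ssubset hiS)
    rw [← sum_erase_add S _ hiS]
    linarith

def initialSegment (π : Fin n ≃ N) (t : ℕ) : Finset N :=
  {j | (π.symm j : ℕ) < t}

omit [DecidableEq N] in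
theorem predecessors_apply (π : Fin n ≃ N) (m : Fin n) :
    predecessors π (π m) = initialSegment π m := by
  ext j
  simp only [predecessors, initialSegment, mem_filter, Equiv.symm_apply_apply, Fin.lt_def]

theorem insert_predecessors_apply (π : Fin n ≃ N) (m : Fin n) :
    insert (π m) (predecessors π (π m)) = initialSegment π (m + 1) := by
  ext j
  rw [mem_insert, predecessors_apply]
  simp only [initialSegment, mem_filter, mem_univ, true_and, Nat.lt_succ_iff_lt_or_eq,
    ← Equiv.symm_apply_eq, Fin.ext_iff]
  tauto

theorem sum_marginalVector {v : Finset N → ℝ} (hv₀ : v ∅ = 0) (π : Fin n ≃ N) :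
    ∑ i, marginalVector v π i = v univ := by
  have h₀ : initialSegment π 0 = ∅ := by ext j; simp [initialSegment]
  have hn : initialSegment π n = univ := by ext j; simp [initialSegment]
  rw [← Equiv.sum_comp π]
  calc ∑ m : Fin n, marginalVector v π (π m)
      = ∑ t ∈ range n, (v (initialSegment π (t + 1)) - v (initialSegment π t)) := by
        rw [← Fin.sum_univ_eq_sum_range (fun t => v (initialSegment π (t + 1)) - _)]
        exact sum_congr rfl fun m _ => by
          rw [marginalVector, insert_predecessors_apply, predecessors_apply]
    _ = v univ := by
        rw [sum_range_sub (fun t => v (initialSegment π t)), hn, h₀, hv₀, sub_zero]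

theorem IsConvexGame.inCore_marginalVector {v : Finset N → ℝ} (hv : IsConvexGame v)
    (hv₀ : v ∅ = 0) (π : Fin n ≃ N) : InCore v (marginalVector v π) :=
  ⟨sum_marginalVector hv₀ π, hv.le_sum_marginalVector hv₀ π⟩

def splitLabel (i : N) (S : Finset N) (j : N) : Ordering :=
  if j ∈ S then .lt else if j = i then .eq else .gt

omit [Fintype N] in
theorem splitLabel_eq_lt_iff {i : N} {S : Finset N} {j : N} :
    splitLabel i S j = .lt ↔ j ∈ S := by
  unfold splitLabel; split_ifs <;> simp_all

omit [Fintype N] in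
theorem splitLabel_eq_eq_iff {i : N} {S : Finset N} (hi : i ∉ S) {j : N} :
    splitLabel i S j = .eq ↔ j = i := by
  by_cases h : j = i
  · simp [splitLabel, h, hi]
  · simp only [splitLabel, h, if_false, iff_false]
    split_ifs <;> simp

omit [Fintype N] in
theorem splitLabel_eq_gt_iff {i : N} {S : Finset N} {j : N} :
    splitLabel i S j = .gt ↔ j ∉ insert i S := by
  unfold splitLabel; split_ifs <;> simp_all

theorem predecessors_eq_iff (π : Fin n ≃ N) {i : N} {S : Finset N} (hi : i ∉ S)
    (m₀ : Fin n) (hm₀ : (m₀ : ℕ) = #S) :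
    predecessors π i = S ↔ splitLabel i S ∘ π = (compare · m₀) := by
  constructor
  · rintro rfl
    have hpos : π.symm i = m₀ := Fin.ext (by rw [hm₀, val_symm_eq_card_predecessors])
    funext m
    rcases lt_trichotomy m m₀ with hm | rfl | hm
    · simp [splitLabel, predecessors, hpos, hm, compare_lt_iff_lt.2 hm]
    · simp [splitLabel, ← hpos, hi]
    · have hne : π m ≠ i := fun h => hm.ne' (by rw [← hpos, ← h, Equiv.symm_apply_apply])
      simp [splitLabel, predecessors, hpos, hm.not_gt, hne, compare_gt_iff_gt.2 hm]
  · intro h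
    have hlabel (j : N) : splitLabel i S j = compare (π.symm j) m₀ := by
      simpa using congrFun h (π.symm j)
    have hpos : π.symm i = m₀ := by
      simpa [splitLabel, hi, eq_comm (a := Ordering.eq)] using hlabel i
    ext j
    rw [← splitLabel_eq_lt_iff (i := i) (S := S), hlabel, compare_lt_iff_lt]
    simp [predecessors, hpos]

/-- These orderings are the ones compatible with `splitLabel i S`, so they are counted by the
stabilizer of that labelling. -/
theorem card_filter_predecessors_eq {i : N} {S : Finset N} (hi : i ∉ S) :
    #{π : Fin (Fintype.card N) ≃ N | predecessors π i = S}
      = (#S).factorial * (Fintype.card N - #S - 1).factorial := by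
  have hS : #S < Fintype.card N :=
    calc #S < #(insert i S) := by rw [card_insert_of_notMem hi]; omega
      _ ≤ Fintype.card N := card_le_univ _
  have hlt : Fintype.card {j // splitLabel i S j = .lt} = #S := by
    simp [splitLabel_eq_lt_iff]
  have heq : Fintype.card {j // splitLabel i S j = .eq} = 1 := by
    simp [splitLabel_eq_eq_iff hi]
  have hgt : Fintype.card {j // splitLabel i S j = .gt} = Fintype.card N - #S - 1 := by
    simp only [splitLabel_eq_gt_iff]
    rw [Fintype.card_subtype_compl, Fintype.card_coe, card_insert_of_notMem hi]
    omega
  rw [← Fintype.card_subtype, Fintype.card_congr (Equiv.subtypeEquivRight fun π =>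
    predecessors_eq_iff π hi ⟨#S, hS⟩ rfl), Fintype.card_equiv_comp_eq]
  · rw [show (univ : Finset Ordering) = {.lt, .eq, .gt} from rfl]
    simp [hlt, heq, hgt]
  · rintro (_ | _ | _)
    · simp [hlt, compare_lt_iff_lt, Fintype.card_subtype, filter_gt_eq_Iio]
    · simp [heq]
    · simp [hgt, compare_gt_iff_gt, Fintype.card_subtype, filter_lt_eq_Ioi]
      omega

end Orderings

theorem sum_marginalVector_eq_factorial_mul_shapley (v : Finset N → ℝ) (i : N) :
    ∑ π : Fin (Fintype.card N) ≃ N, marginalVector v π i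
      = (Fintype.card N).factorial * shapley v i := by
  have hmaps (π : Fin (Fintype.card N) ≃ N) (_ : π ∈ univ) :
      predecessors π i ∈ (univ.erase i).powerset :=
    mem_powerset.2 fun j hj =>
      mem_erase.2 ⟨ne_of_mem_of_not_mem hj (self_notMem_predecessors π i), mem_univ j⟩
  rw [shapley, mul_sum, ← sum_fiberwise_of_maps_to hmaps]
  refine sum_congr rfl fun S hS => ?_
  have hi : i ∉ S := fun h => by simpa using mem_powerset.1 hS h
  have hfiber (π : Fin (Fintype.card N) ≃ N) (hπ : predecessors π i = S) :
      marginalVector v π i = v (insert i S) - v S := by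
    rw [marginalVector, hπ]
  rw [sum_congr rfl fun π hπ => hfiber π (mem_filter.1 hπ).2, sum_const,
    card_filter_predecessors_eq hi, nsmul_eq_mul, shapleyCoeff]
  have hfact := Nat.factorial_ne_zero (Fintype.card N)
  push_cast
  field_simp

theorem IsConvexGame.inCore_shapley {v : Finset N → ℝ} (hv : IsConvexGame v)
    (hv₀ : v ∅ = 0) : InCore v (shapley v) := by
  have hcard : Fintype.card (Fin (Fintype.card N) ≃ N) = (Fintype.card N).factorial := by
    rw [Fintype.card_equiv (Fintype.equivFin N).symm, Fintype.card_fin]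
  have hfact : ((Fintype.card N).factorial : ℝ) ≠ 0 := by positivity
  have haverage : shapley v = ∑ π : Fin (Fintype.card N) ≃ N,
      ((Fintype.card N).factorial : ℝ)⁻¹ • marginalVector v π := by
    ext i
    rw [Finset.sum_apply]
    simp only [Pi.smul_apply, smul_eq_mul, ← mul_sum, sum_marginalVector_eq_factorial_mul_shapley]
    field_simp
  rw [haverage]
  refine (convex_setOf_inCore v).sum_mem (fun _ _ => by positivity) ?_
    fun π _ => hv.inCore_marginalVector hv₀ π
  rw [sum_const, card_univ, hcard, nsmul_eq_mul, mul_inv_cancel₀ hfact]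

theorem shapley_of_selection_in_selection_core_general (wl wu : Finset N → ℝ)
    (hconv : ∀ v, IsSelection wl wu v → IsConvexGame v)
    (v : Finset N → ℝ) (hv : IsSelection wl wu v) :
    (fun i => shapley v i) ∈ selectionCore wl wu ∧ InCore v (fun i => shapley v i) := by
  have hcore : InCore v (shapley v) := (hconv v hv).inCore_shapley hv.1
  exact ⟨⟨v, hv, hcore⟩, hcore⟩

theorem shapley_of_selection_in_selection_core (wl wu : Finset N → ℝ)
    (hw : IsIntervalGame wl wu)
    (hconv : ∀ v, IsSelection wl wu v → IsConvexGame v)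
    (v : Finset N → ℝ) (hv : IsSelection wl wu v) :
    (fun i => shapley v i) ∈ selectionCore wl wu ∧ InCore v (fun i => shapley v i) :=
  shapley_of_selection_in_selection_core_general wl wu hconv v hv
end

section
/- Every selection convex cooperative interval game on a finite player set N is strongly balanced, i.e. every selection of it has a nonempty core. -/
open Finset

variable {N : Type*} [Fintype N] [DecidableEq N]

/-!
A convex game with `v ∅ = 0` has a nonempty core: admit the players one at a time and pay each
newcomer his marginal contribution to the coalition formed so far. Supermodularity says that
marginal contributions can only grow as the coalition grows, so every coalition `S` is paid at
least the sum of its members' marginal contributions to the subcoalitions of `S`, which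
telescopes to `v S`. Every selection of a selection convex interval game is convex, hence has a
nonempty core.
-/

omit [Fintype N] in
theorem IsConvexGame.sub_le_sub_of_subset {v : Finset N → ℝ} (hv : IsConvexGame v)
    {T P : Finset N} {j : N} (hTP : T ⊆ P) (hj : j ∉ P) :
    v (insert j T) - v T ≤ v (insert j P) - v P := by
  have hunion : insert j T ∪ P = insert j P := by
    rw [insert_union, union_eq_right.mpr hTP]
  have hinter : insert j T ∩ P = T := by
    rw [insert_inter_of_notMem hj, inter_eq_left.mpr hTP]
  have := hv (insert j T) P
  rw [hunion, hinter] at this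
  linarith

omit [Fintype N] in
theorem IsConvexGame.exists_sum_eq_and_le_sum {v : Finset N → ℝ} (hv : IsConvexGame v)
    (h0 : v ∅ = 0) (P : Finset N) :
    ∃ x : N → ℝ, ∑ i ∈ P, x i = v P ∧ ∀ S ⊆ P, v S ≤ ∑ i ∈ S, x i := by
  induction P using Finset.induction_on with
  | empty => exact ⟨0, by simp [h0], fun S hS => by simp [subset_empty.mp hS, h0]⟩
  | insert j P hj ih =>
    obtain ⟨x, hxP, hxS⟩ := ih
    set m := v (insert j P) - v P
    refine ⟨Function.update x j m, ?_, fun S hS => ?_⟩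
    · rw [sum_insert hj, Function.update_self, sum_update_of_notMem hj]
      linarith
    by_cases hjS : j ∈ S
    · have hT : S.erase j ⊆ P := subset_insert_iff.mp hS
      calc v S = v (insert j (S.erase j)) := by rw [insert_erase hjS]
        _ ≤ v (S.erase j) + m := by linarith [hv.sub_le_sub_of_subset hT hj]
        _ ≤ ∑ i ∈ S.erase j, x i + m := by linarith [hxS _ hT]
        _ = ∑ i ∈ S, Function.update x j m i := by
          rw [← sum_erase_add _ _ hjS, Function.update_self,
            sum_update_of_notMem (notMem_erase j S)]
    · rw [sum_update_of_notMem hjS]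
      exact hxS S fun i hi => (mem_insert.mp (hS hi)).resolve_left (ne_of_mem_of_not_mem hi hjS)

theorem IsConvexGame.exists_inCore {v : Finset N → ℝ} (hv : IsConvexGame v) (h0 : v ∅ = 0) :
    ∃ x : N → ℝ, InCore v x := by
  obtain ⟨x, hsum, hle⟩ := hv.exists_sum_eq_and_le_sum h0 univ
  exact ⟨x, hsum, fun S => hle S (subset_univ S)⟩

theorem selection_convex_strongly_balanced_general (wl wu : Finset N → ℝ)
    (hconv : ∀ v, IsSelection wl wu v → IsConvexGame v) :
    ∀ v, IsSelection wl wu v → ∃ x : N → ℝ, InCore v x :=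
  fun v hv => (hconv v hv).exists_inCore hv.1

theorem selection_convex_strongly_balanced (wl wu : Finset N → ℝ)
    (hw : IsIntervalGame wl wu)
    (hconv : ∀ v, IsSelection wl wu v → IsConvexGame v) :
    ∀ v, IsSelection wl wu v → ∃ x : N → ℝ, InCore v x :=
  selection_convex_strongly_balanced_general wl wu hconv
end
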